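/- arXiv:1902.04945 — 4 statements merged into one kernel-verified Lean document; each statement's English description precedes it below -/
import Mathlib

section
/- Let d ≥ 1 be an integer, j ∈ ℕ₀ and 0 < p_i ≤ u_i < ∞ for i = 1, 2. If either (p1 ≥ p2 and u2 ≥ u1) or (p1 < p2 and p2/u2 ≤ p1/u1), then the operator quasi-norm of the identity map id_j : m^{2^{jd}}_{u1,p1} → m^{2^{jd}}_{u2,p2} equals 1. -/
open scoped ENNReal NNReal

noncomputable section

/-- `Q_{j,m} ⊆ Q = [0,1)^d` iff `0 ≤ m i < 2^j` for every coordinate `i`. -/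
def inUnitCube (d j : ℕ) (m : Fin d → ℤ) : Prop :=
  ∀ i, 0 ≤ m i ∧ m i < 2 ^ j

/-- For `ν ≤ j`: `Q_{j,m} ⊆ Q_{ν,k}`. -/
def cubeSub (d j ν : ℕ) (m k : Fin d → ℤ) : Prop :=
  ∀ i, k i * 2 ^ (j - ν) ≤ m i ∧ m i < (k i + 1) * 2 ^ (j - ν)

/-- The finite-dimensional Morrey quasi-norm `‖· | m^{2^{jd}}_{u,p}‖` (`ℝ≥0∞`-valued),
on coefficients indexed by the `m ∈ ℤ^d` with `Q_{j,m} ⊆ Q` (other coordinates are ignored). -/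
def mNorm (d : ℕ) (u p : ℝ) (j : ℕ) (lam : (Fin d → ℤ) → ℂ) : ℝ≥0∞ :=
  ⨆ νk : {νk : ℕ × (Fin d → ℤ) // νk.1 ≤ j ∧ inUnitCube d νk.1 νk.2},
    (2 : ℝ≥0∞) ^ ((d : ℝ) * ((j : ℝ) - (νk.1.1 : ℝ)) * (1 / u - 1 / p)) *
      (∑' m : {m : Fin d → ℤ // cubeSub d j νk.1.1 m νk.1.2},
        ((‖lam m.1‖₊ : ℝ≥0∞)) ^ p) ^ (1 / p)

/-- The `ℓ_q^{2^{jd}}` quasi-norm (`0 < q < ∞`) on level-`j` coefficients. -/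
def lqNorm (d : ℕ) (q : ℝ) (j : ℕ) (lam : (Fin d → ℤ) → ℂ) : ℝ≥0∞ :=
  (∑' m : {m : Fin d → ℤ // inUnitCube d j m}, ((‖lam m.1‖₊ : ℝ≥0∞)) ^ q) ^ (1 / q)

/-- The quasi-norm of the sequence space `ñ^σ_{u,p,q}(Q)`, `q ∈ (0,∞]`. -/
def nNorm (d : ℕ) (σ u p : ℝ) (q : ℝ≥0∞) (lam : ℕ → (Fin d → ℤ) → ℂ) : ℝ≥0∞ :=
  if q = ∞ then
    ⨆ j : ℕ, (2 : ℝ≥0∞) ^ ((j : ℝ) * (σ - d / u)) * mNorm d u p j (lam j)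
  else
    (∑' j : ℕ, ((2 : ℝ≥0∞) ^ ((j : ℝ) * (σ - d / u)) * mNorm d u p j (lam j)) ^ q.toReal) ^
      (1 / q.toReal)

/-- `k`-th entropy number of the identity map between two quasi-norms on one ambient group:
the infimum of all `ε > 0` such that the `N₁`-unit ball is covered by `2^(k-1)` `N₂`-balls of
radius `ε`. -/
def entropyNumber {Λ : Type*} [AddCommGroup Λ] (N₁ N₂ : Λ → ℝ≥0∞) (k : ℕ) : ℝ≥0∞ :=
  sInf {ε : ℝ≥0∞ | 0 < ε ∧ ∃ c : Fin (2 ^ (k - 1)) → Λ,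
    ∀ x : Λ, N₁ x ≤ 1 → ∃ i, N₂ (x - c i) ≤ ε}

/-- Operator quasi-norm of the identity map between two quasi-norms on one ambient space:
the smallest `C` with `N₂ x ≤ C · N₁ x` for all `x`. -/
def opNorm {Λ : Type*} (N₁ N₂ : Λ → ℝ≥0∞) : ℝ≥0∞ :=
  sInf {C : ℝ≥0∞ | ∀ x, N₂ x ≤ C * N₁ x}

end

noncomputable section Aux

/-- Equiv between the lattice points of a dyadic cube and a product of Fins. -/
def cubeEquiv (d e : ℕ) (k : Fin d → ℤ) :
    {m : Fin d → ℤ // ∀ i, k i * 2 ^ e ≤ m i ∧ m i < (k i + 1) * 2 ^ e} ≃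
      (Fin d → Fin (2 ^ e)) where
  toFun m i := ⟨(m.1 i - k i * 2 ^ e).toNat, by
    have h := m.2 i
    have hc : ((2 ^ e : ℕ) : ℤ) = 2 ^ e := by push_cast; ring
    have hexp : (k i + 1) * (2:ℤ) ^ e = k i * 2 ^ e + 2 ^ e := by ring
    omega⟩
  invFun f := ⟨fun i => k i * 2 ^ e + (f i : ℤ), fun i => by
    have h := (f i).2
    have hc : ((2 ^ e : ℕ) : ℤ) = 2 ^ e := by push_cast; ring
    have hexp : (k i + 1) * (2:ℤ) ^ e = k i * 2 ^ e + 2 ^ e := by ring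
    show k i * 2 ^ e ≤ k i * 2 ^ e + (f i : ℤ) ∧ k i * 2 ^ e + (f i : ℤ) < (k i + 1) * 2 ^ e
    omega⟩
  left_inv m := by
    ext i
    have h := m.2 i
    have hc : ((2 ^ e : ℕ) : ℤ) = 2 ^ e := by push_cast; ring
    simp only
    omega
  right_inv f := by
    funext i
    ext
    have h := (f i).2
    have hc : ((2 ^ e : ℕ) : ℤ) = 2 ^ e := by push_cast; ring
    simp only
    omega

open Finset in
lemma sum_rpow_le_card_mul_rpow {ι : Type*} [Fintype ι] (b : ι → ℝ≥0∞) {θ : ℝ}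
    (hθ : 0 < θ) (hθ1 : θ ≤ 1) :
    ∑ i, b i ^ θ ≤ (Fintype.card ι : ℝ≥0∞) ^ (1 - θ) * (∑ i, b i) ^ θ := by
  rcases isEmpty_or_nonempty ι with hι | hι
  · simp
  · set N : ℝ≥0∞ := (Fintype.card ι : ℝ≥0∞) with hN
    have hcard : (0 : ℕ) < Fintype.card ι := Fintype.card_pos
    have hN0 : N ≠ 0 := by simp [hN, Fintype.card_ne_zero]
    have hNtop : N ≠ ∞ := by simp [hN]
    have hw : ∑ _i : ι, N⁻¹ = 1 := by
      rw [Finset.sum_const, Finset.card_univ, nsmul_eq_mul, hN]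
      exact ENNReal.mul_inv_cancel hN0 hNtop
    have hp : (1:ℝ) ≤ 1 / θ := by
      rw [le_div_iff₀ hθ]; linarith
    have key := ENNReal.rpow_arith_mean_le_arith_mean_rpow Finset.univ
      (fun _ => N⁻¹) (fun i => b i ^ θ) hw hp
    have hsimp : ∀ i : ι, N⁻¹ * (b i ^ θ) ^ (1/θ) = N⁻¹ * b i := by
      intro i
      rw [← ENNReal.rpow_mul, mul_one_div_cancel (ne_of_gt hθ), ENNReal.rpow_one]
    rw [Finset.sum_congr rfl (fun i _ => hsimp i)] at key
    have key2 : ∑ i, N⁻¹ * b i ^ θ ≤ (∑ i, N⁻¹ * b i) ^ θ := by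
      calc ∑ i, N⁻¹ * b i ^ θ
          = ((∑ i, N⁻¹ * b i ^ θ) ^ (1/θ)) ^ θ := by
            rw [← ENNReal.rpow_mul, one_div_mul_cancel (ne_of_gt hθ), ENNReal.rpow_one]
        _ ≤ (∑ i, N⁻¹ * b i) ^ θ := ENNReal.rpow_le_rpow key (le_of_lt hθ)
    calc ∑ i, b i ^ θ = N * ∑ i, N⁻¹ * b i ^ θ := by
          rw [← Finset.mul_sum, ← mul_assoc, ENNReal.mul_inv_cancel hN0 hNtop, one_mul]
      _ ≤ N * (∑ i, N⁻¹ * b i) ^ θ := mul_le_mul_right key2 N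
      _ = N * (N⁻¹ * ∑ i, b i) ^ θ := by rw [Finset.mul_sum]
      _ = N ^ (1 - θ) * (∑ i, b i) ^ θ := by
          rw [ENNReal.mul_rpow_of_nonneg _ _ (le_of_lt hθ), ← mul_assoc,
            ← ENNReal.rpow_neg_one, ← ENNReal.rpow_mul]
          have hne : N ^ ((1:ℝ) - θ) = N * N ^ (-1 * θ) := by
            rw [show (1:ℝ) - θ = 1 + -1 * θ by ring, ENNReal.rpow_add _ _ hN0 hNtop,
              ENNReal.rpow_one]
          rw [hne]

open Finset in
lemma tsum_rpow_le_card_mul_rpow {ι : Type*} [Fintype ι] (b : ι → ℝ≥0∞) {θ : ℝ}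
    (hθ : 0 < θ) (hθ1 : θ ≤ 1) :
    ∑' i, b i ^ θ ≤ (Fintype.card ι : ℝ≥0∞) ^ (1 - θ) * (∑' i, b i) ^ θ := by
  rw [tsum_fintype, tsum_fintype]
  exact sum_rpow_le_card_mul_rpow b hθ hθ1

lemma two_rpow_helper (E F : ℝ) (M : ℝ≥0∞) {p : ℝ} (hp : 0 < p) :
    (2:ℝ≥0∞) ^ E * ((2:ℝ≥0∞) ^ F * M ^ p) ^ (1/p) = (2:ℝ≥0∞) ^ (E + F * (1/p)) * M := by
  rw [ENNReal.mul_rpow_of_nonneg _ _ (by positivity : (0:ℝ) ≤ 1/p), ← ENNReal.rpow_mul,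
    ← ENNReal.rpow_mul, mul_one_div_cancel hp.ne', ENNReal.rpow_one, ← mul_assoc,
    ← ENNReal.rpow_add _ _ (by norm_num) (by norm_num)]

lemma two_rpow_ne_top (x : ℝ) : (2 : ℝ≥0∞) ^ x ≠ ∞ := by
  rcases le_or_gt 0 x with hx | hx
  · exact ENNReal.rpow_ne_top_of_nonneg hx (by norm_num)
  · have : (2 : ℝ≥0∞) ^ x ≤ (2 : ℝ≥0∞) ^ (0:ℝ) :=
      ENNReal.rpow_le_rpow_of_exponent_le one_le_two hx.le
    rw [ENNReal.rpow_zero] at this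
    exact ne_top_of_le_ne_top (by norm_num) this

lemma two_rpow_ne_zero (x : ℝ) : (2 : ℝ≥0∞) ^ x ≠ 0 :=
  (ENNReal.rpow_pos (by norm_num) (by norm_num)).ne'

/-- The subtype of lattice points of a dyadic subcube as needed in `mNorm`. -/
def cubeSubEquiv (d j ν : ℕ) (k : Fin d → ℤ) :
    {m : Fin d → ℤ // cubeSub d j ν m k} ≃ (Fin d → Fin (2 ^ (j - ν))) :=
  cubeEquiv d (j - ν) k

instance instFintypeCubeSub (d j ν : ℕ) (k : Fin d → ℤ) :
    Fintype {m : Fin d → ℤ // cubeSub d j ν m k} :=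
  Fintype.ofEquiv _ (cubeSubEquiv d j ν k).symm

lemma card_cubeSub (d j ν : ℕ) (k : Fin d → ℤ) :
    Fintype.card {m : Fin d → ℤ // cubeSub d j ν m k} = 2 ^ ((j - ν) * d) := by
  rw [Fintype.card_congr (cubeSubEquiv d j ν k)]
  simp [← pow_mul]

/-- One term of the Morrey quasi-norm. -/
def mterm (d : ℕ) (u p : ℝ) (j ν : ℕ) (k : Fin d → ℤ) (lam : (Fin d → ℤ) → ℂ) : ℝ≥0∞ :=
  (2 : ℝ≥0∞) ^ ((d : ℝ) * ((j : ℝ) - (ν : ℝ)) * (1 / u - 1 / p)) *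
    (∑' m : {m : Fin d → ℤ // cubeSub d j ν m k}, ((‖lam m.1‖₊ : ℝ≥0∞)) ^ p) ^ (1 / p)

lemma mNorm_eq (d : ℕ) (u p : ℝ) (j : ℕ) (lam : (Fin d → ℤ) → ℂ) :
    mNorm d u p j lam =
      ⨆ νk : {νk : ℕ × (Fin d → ℤ) // νk.1 ≤ j ∧ inUnitCube d νk.1 νk.2},
        mterm d u p j νk.1.1 νk.1.2 lam := rfl

lemma mterm_le_mNorm (d : ℕ) (u p : ℝ) (j ν : ℕ) (k : Fin d → ℤ)
    (hν : ν ≤ j) (hk : inUnitCube d ν k) (lam : (Fin d → ℤ) → ℂ) :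
    mterm d u p j ν k lam ≤ mNorm d u p j lam := by
  rw [mNorm_eq]
  exact le_iSup_of_le ⟨(ν, k), hν, hk⟩ le_rfl

lemma mNorm_le_of_forall (d : ℕ) (u p : ℝ) (j : ℕ) (lam : (Fin d → ℤ) → ℂ) {X : ℝ≥0∞}
    (h : ∀ ν k, ν ≤ j → inUnitCube d ν k → mterm d u p j ν k lam ≤ X) :
    mNorm d u p j lam ≤ X := by
  rw [mNorm_eq]
  exact iSup_le fun νk => h νk.1.1 νk.1.2 νk.2.1 νk.2.2

end Aux


lemma mNorm_anti (d : ℕ) (u1 p1 u2 p2 : ℝ)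
    (hp1 : 0 < p1) (hp1u1 : p1 ≤ u1) (hp2 : 0 < p2) (hp2u2 : p2 ≤ u2) (j : ℕ)
    (h : (p2 ≤ p1 ∧ u1 ≤ u2) ∨ (p1 < p2 ∧ p2 / u2 ≤ p1 / u1))
    (lam : (Fin d → ℤ) → ℂ) :
    mNorm d u2 p2 j lam ≤ mNorm d u1 p1 j lam := by
  have hu1 : 0 < u1 := hp1.trans_le hp1u1
  have hu2 : 0 < u2 := hp2.trans_le hp2u2
  refine mNorm_le_of_forall d u2 p2 j lam fun ν k hν hk => ?_
  have hD0 : (0:ℝ) ≤ (d:ℝ) * ((j:ℝ) - (ν:ℝ)) :=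
    mul_nonneg (Nat.cast_nonneg d) (sub_nonneg.2 (by exact_mod_cast hν))
  rcases h with ⟨hp21, hu12⟩ | ⟨hp12, hr⟩
  · -- Case A : p2 ≤ p1 and u1 ≤ u2
    have hcN : (Fintype.card {m : Fin d → ℤ // cubeSub d j ν m k} : ℝ≥0∞) =
        (2:ℝ≥0∞) ^ ((d:ℝ) * ((j:ℝ) - (ν:ℝ))) := by
      rw [card_cubeSub d j ν k, show ((2 ^ ((j - ν) * d) : ℕ) : ℝ≥0∞) = (2:ℝ≥0∞) ^ ((((j - ν) * d : ℕ)) : ℝ) by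
        rw [ENNReal.rpow_natCast]; push_cast; ring]
      congr 1
      rw [Nat.cast_mul, Nat.cast_sub hν]
      ring
    have hθ : 0 < p2 / p1 := div_pos hp2 hp1
    have hθ1 : p2 / p1 ≤ 1 := (div_le_one hp1).2 hp21
    have hsum : (∑' m : {m : Fin d → ℤ // cubeSub d j ν m k}, ((‖lam m.1‖₊ : ℝ≥0∞)) ^ p2)
        ≤ (2:ℝ≥0∞) ^ ((d:ℝ) * ((j:ℝ) - (ν:ℝ)) * (1 - p2/p1)) *
          (∑' m : {m : Fin d → ℤ // cubeSub d j ν m k}, ((‖lam m.1‖₊ : ℝ≥0∞)) ^ p1) ^ (p2/p1) := by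
      have hpt : ∀ m : {m : Fin d → ℤ // cubeSub d j ν m k},
          ((‖lam m.1‖₊ : ℝ≥0∞)) ^ p2 = (((‖lam m.1‖₊ : ℝ≥0∞)) ^ p1) ^ (p2/p1) := by
        intro m
        rw [← ENNReal.rpow_mul]
        congr 1
        field_simp
      calc (∑' m : {m : Fin d → ℤ // cubeSub d j ν m k}, ((‖lam m.1‖₊ : ℝ≥0∞)) ^ p2)
          = ∑' m : {m : Fin d → ℤ // cubeSub d j ν m k},
              (((‖lam m.1‖₊ : ℝ≥0∞)) ^ p1) ^ (p2/p1) := tsum_congr hpt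
        _ ≤ (Fintype.card {m : Fin d → ℤ // cubeSub d j ν m k} : ℝ≥0∞) ^ (1 - p2/p1) *
            (∑' m : {m : Fin d → ℤ // cubeSub d j ν m k},
              ((‖lam m.1‖₊ : ℝ≥0∞)) ^ p1) ^ (p2/p1) :=
            tsum_rpow_le_card_mul_rpow _ hθ hθ1
        _ = _ := by rw [hcN, ← ENNReal.rpow_mul]
    have hexp : (d:ℝ) * ((j:ℝ) - (ν:ℝ)) * (1/u2 - 1/p2) +
        ((d:ℝ) * ((j:ℝ) - (ν:ℝ)) * (1 - p2/p1) * (1/p2)) =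
        (d:ℝ) * ((j:ℝ) - (ν:ℝ)) * (1/u2 - 1/p1) := by
      field_simp
      ring
    calc mterm d u2 p2 j ν k lam
        = (2:ℝ≥0∞) ^ ((d:ℝ) * ((j:ℝ) - (ν:ℝ)) * (1/u2 - 1/p2)) *
          (∑' m : {m : Fin d → ℤ // cubeSub d j ν m k}, ((‖lam m.1‖₊ : ℝ≥0∞)) ^ p2) ^ (1/p2) :=
          rfl
      _ ≤ (2:ℝ≥0∞) ^ ((d:ℝ) * ((j:ℝ) - (ν:ℝ)) * (1/u2 - 1/p2)) *
          ((2:ℝ≥0∞) ^ ((d:ℝ) * ((j:ℝ) - (ν:ℝ)) * (1 - p2/p1)) *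
            (∑' m : {m : Fin d → ℤ // cubeSub d j ν m k},
              ((‖lam m.1‖₊ : ℝ≥0∞)) ^ p1) ^ (p2/p1)) ^ (1/p2) :=
          mul_le_mul_right (ENNReal.rpow_le_rpow hsum (by positivity)) _
      _ = (2:ℝ≥0∞) ^ ((d:ℝ) * ((j:ℝ) - (ν:ℝ)) * (1/u2 - 1/p2) +
            (d:ℝ) * ((j:ℝ) - (ν:ℝ)) * (1 - p2/p1) * (1/p2)) *
          (∑' m : {m : Fin d → ℤ // cubeSub d j ν m k},
            ((‖lam m.1‖₊ : ℝ≥0∞)) ^ p1) ^ (1/p1) := by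
          rw [ENNReal.mul_rpow_of_nonneg _ _ (by positivity), ← ENNReal.rpow_mul,
            ← ENNReal.rpow_mul, ← mul_assoc,
            ← ENNReal.rpow_add _ _ (by norm_num) (by norm_num)]
          congr 2
          field_simp
      _ ≤ (2:ℝ≥0∞) ^ ((d:ℝ) * ((j:ℝ) - (ν:ℝ)) * (1/u1 - 1/p1)) *
          (∑' m : {m : Fin d → ℤ // cubeSub d j ν m k},
            ((‖lam m.1‖₊ : ℝ≥0∞)) ^ p1) ^ (1/p1) := by
          apply mul_le_mul_left
          apply ENNReal.rpow_le_rpow_of_exponent_le one_le_two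
          rw [hexp]
          have h12 : 1/u2 ≤ 1/u1 := one_div_le_one_div_of_le hu1 hu12
          have := mul_le_mul_of_nonneg_left (by linarith : (1:ℝ)/u2 - 1/p1 ≤ 1/u1 - 1/p1) hD0
          linarith
      _ ≤ mNorm d u1 p1 j lam := mterm_le_mNorm d u1 p1 j ν k hν hk lam
  · -- Case B : p1 < p2 and p2/u2 ≤ p1/u1
    have habove : ∀ m : {m : Fin d → ℤ // cubeSub d j ν m k},
        ((‖lam m.1‖₊ : ℝ≥0∞)) ≤ mNorm d u1 p1 j lam := by
      intro m
      have hmQ : inUnitCube d j m.1 := by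
        intro i
        have h1 := m.2 i
        have h2 := hk i
        have hpow : (2:ℤ) ^ ν * 2 ^ (j - ν) = 2 ^ j := by
          rw [← pow_add]; congr 1; omega
        have hppos : (0:ℤ) < 2 ^ (j - ν) := by positivity
        constructor
        · nlinarith [h2.1, h1.1]
        · nlinarith [h2.2, h1.2]
      have hmm : cubeSub d j j m.1 m.1 := by
        intro i
        rw [Nat.sub_self]
        constructor <;> simp
      have ht := mterm_le_mNorm d u1 p1 j j m.1 le_rfl hmQ lam
      rw [mterm, show (d:ℝ) * ((j:ℝ) - (j:ℝ)) * (1/u1 - 1/p1) = 0 by ring,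
        ENNReal.rpow_zero, one_mul] at ht
      have hsingle := ENNReal.le_tsum
        (f := fun m' : {m' : Fin d → ℤ // cubeSub d j j m' m.1} =>
          ((‖lam m'.1‖₊ : ℝ≥0∞)) ^ p1) ⟨m.1, hmm⟩
      calc ((‖lam m.1‖₊ : ℝ≥0∞))
          = (((‖lam m.1‖₊ : ℝ≥0∞)) ^ p1) ^ (1/p1) := by
            rw [← ENNReal.rpow_mul, mul_one_div_cancel hp1.ne', ENNReal.rpow_one]
        _ ≤ (∑' m' : {m' : Fin d → ℤ // cubeSub d j j m' m.1},
              ((‖lam m'.1‖₊ : ℝ≥0∞)) ^ p1) ^ (1/p1) :=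
            ENNReal.rpow_le_rpow hsingle (by positivity)
        _ ≤ mNorm d u1 p1 j lam := ht
    have hterm1 : (2:ℝ≥0∞) ^ ((d:ℝ) * ((j:ℝ) - (ν:ℝ)) * (1/u1 - 1/p1)) *
        (∑' m : {m : Fin d → ℤ // cubeSub d j ν m k},
          ((‖lam m.1‖₊ : ℝ≥0∞)) ^ p1) ^ (1/p1) ≤ mNorm d u1 p1 j lam :=
      mterm_le_mNorm d u1 p1 j ν k hν hk lam
    have hS1 : (∑' m : {m : Fin d → ℤ // cubeSub d j ν m k}, ((‖lam m.1‖₊ : ℝ≥0∞)) ^ p1)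
        ≤ (2:ℝ≥0∞) ^ (-((d:ℝ) * ((j:ℝ) - (ν:ℝ)) * (1/u1 - 1/p1)) * p1) *
          (mNorm d u1 p1 j lam) ^ p1 := by
      have h1 : (∑' m : {m : Fin d → ℤ // cubeSub d j ν m k},
          ((‖lam m.1‖₊ : ℝ≥0∞)) ^ p1) ^ (1/p1) ≤
          (2:ℝ≥0∞) ^ (-((d:ℝ) * ((j:ℝ) - (ν:ℝ)) * (1/u1 - 1/p1))) * mNorm d u1 p1 j lam := by
        calc (∑' m : {m : Fin d → ℤ // cubeSub d j ν m k},
              ((‖lam m.1‖₊ : ℝ≥0∞)) ^ p1) ^ (1/p1)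
            = (2:ℝ≥0∞) ^ (-((d:ℝ) * ((j:ℝ) - (ν:ℝ)) * (1/u1 - 1/p1))) *
              ((2:ℝ≥0∞) ^ ((d:ℝ) * ((j:ℝ) - (ν:ℝ)) * (1/u1 - 1/p1)) *
                (∑' m : {m : Fin d → ℤ // cubeSub d j ν m k},
                  ((‖lam m.1‖₊ : ℝ≥0∞)) ^ p1) ^ (1/p1)) := by
              rw [← mul_assoc, ← ENNReal.rpow_add _ _ (by norm_num) (by norm_num),
                neg_add_cancel, ENNReal.rpow_zero, one_mul]
          _ ≤ _ := mul_le_mul_right hterm1 _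
      calc (∑' m : {m : Fin d → ℤ // cubeSub d j ν m k}, ((‖lam m.1‖₊ : ℝ≥0∞)) ^ p1)
          = ((∑' m : {m : Fin d → ℤ // cubeSub d j ν m k},
              ((‖lam m.1‖₊ : ℝ≥0∞)) ^ p1) ^ (1/p1)) ^ p1 := by
            rw [← ENNReal.rpow_mul, one_div_mul_cancel hp1.ne', ENNReal.rpow_one]
        _ ≤ ((2:ℝ≥0∞) ^ (-((d:ℝ) * ((j:ℝ) - (ν:ℝ)) * (1/u1 - 1/p1))) *
              mNorm d u1 p1 j lam) ^ p1 := ENNReal.rpow_le_rpow h1 hp1.le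
        _ = _ := by
            rw [ENNReal.mul_rpow_of_nonneg _ _ hp1.le, ← ENNReal.rpow_mul]
    have hS2 : (∑' m : {m : Fin d → ℤ // cubeSub d j ν m k}, ((‖lam m.1‖₊ : ℝ≥0∞)) ^ p2)
        ≤ (∑' m : {m : Fin d → ℤ // cubeSub d j ν m k}, ((‖lam m.1‖₊ : ℝ≥0∞)) ^ p1) *
          (mNorm d u1 p1 j lam) ^ (p2 - p1) := by
      rw [← ENNReal.tsum_mul_right]
      apply ENNReal.tsum_le_tsum
      intro m
      calc ((‖lam m.1‖₊ : ℝ≥0∞)) ^ p2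
          = ((‖lam m.1‖₊ : ℝ≥0∞)) ^ p1 * ((‖lam m.1‖₊ : ℝ≥0∞)) ^ (p2 - p1) := by
            rw [← ENNReal.rpow_add_of_nonneg p1 (p2 - p1) hp1.le (by linarith)]
            norm_num
        _ ≤ ((‖lam m.1‖₊ : ℝ≥0∞)) ^ p1 * (mNorm d u1 p1 j lam) ^ (p2 - p1) :=
            mul_le_mul_right (ENNReal.rpow_le_rpow (habove m) (by linarith)) _
    have hexp2 : (d:ℝ) * ((j:ℝ) - (ν:ℝ)) * (1/u2 - 1/p2) +
        -((d:ℝ) * ((j:ℝ) - (ν:ℝ)) * (1/u1 - 1/p1)) * p1 * (1/p2) ≤ 0 := by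
      have key : 1/u2 - p1/(u1 * p2) ≤ 0 := by
        rw [div_le_div_iff₀ hu2 hu1] at hr
        rw [sub_nonpos, div_le_div_iff₀ hu2 (by positivity)]
        nlinarith
      have heq : (d:ℝ) * ((j:ℝ) - (ν:ℝ)) * (1/u2 - 1/p2) +
          -((d:ℝ) * ((j:ℝ) - (ν:ℝ)) * (1/u1 - 1/p1)) * p1 * (1/p2) =
          ((d:ℝ) * ((j:ℝ) - (ν:ℝ))) * (1/u2 - p1/(u1 * p2)) := by
        field_simp
        ring
      rw [heq]
      exact mul_nonpos_of_nonneg_of_nonpos hD0 key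
    calc mterm d u2 p2 j ν k lam
        = (2:ℝ≥0∞) ^ ((d:ℝ) * ((j:ℝ) - (ν:ℝ)) * (1/u2 - 1/p2)) *
          (∑' m : {m : Fin d → ℤ // cubeSub d j ν m k}, ((‖lam m.1‖₊ : ℝ≥0∞)) ^ p2) ^ (1/p2) :=
          rfl
      _ ≤ (2:ℝ≥0∞) ^ ((d:ℝ) * ((j:ℝ) - (ν:ℝ)) * (1/u2 - 1/p2)) *
          (((2:ℝ≥0∞) ^ (-((d:ℝ) * ((j:ℝ) - (ν:ℝ)) * (1/u1 - 1/p1)) * p1) *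
            (mNorm d u1 p1 j lam) ^ p1) * (mNorm d u1 p1 j lam) ^ (p2 - p1)) ^ (1/p2) := by
          apply mul_le_mul_right
          exact ENNReal.rpow_le_rpow (le_trans hS2 (mul_le_mul_left hS1 _)) (by positivity)
      _ = (2:ℝ≥0∞) ^ ((d:ℝ) * ((j:ℝ) - (ν:ℝ)) * (1/u2 - 1/p2) +
            -((d:ℝ) * ((j:ℝ) - (ν:ℝ)) * (1/u1 - 1/p1)) * p1 * (1/p2)) *
          mNorm d u1 p1 j lam := by
          have hR : (2:ℝ≥0∞) ^ (-((d:ℝ) * ((j:ℝ) - (ν:ℝ)) * (1/u1 - 1/p1)) * p1) *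
              (mNorm d u1 p1 j lam) ^ p1 * (mNorm d u1 p1 j lam) ^ (p2 - p1) =
              (2:ℝ≥0∞) ^ (-((d:ℝ) * ((j:ℝ) - (ν:ℝ)) * (1/u1 - 1/p1)) * p1) *
              (mNorm d u1 p1 j lam) ^ p2 := by
            rw [mul_assoc, ← ENNReal.rpow_add_of_nonneg p1 (p2 - p1) hp1.le (by linarith),
              show p1 + (p2 - p1) = p2 by ring]
          rw [hR]
          exact two_rpow_helper _ _ _ hp2
      _ ≤ (2:ℝ≥0∞) ^ (0:ℝ) * mNorm d u1 p1 j lam :=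
          mul_le_mul_left (ENNReal.rpow_le_rpow_of_exponent_le one_le_two hexp2) _
      _ = mNorm d u1 p1 j lam := by rw [ENNReal.rpow_zero, one_mul]

lemma mNorm_delta (d : ℕ) (u p : ℝ) (hp : 0 < p) (hpu : p ≤ u) (j : ℕ) :
    mNorm d u p j (fun m => if m = 0 then 1 else 0) = 1 := by
  have hu : 0 < u := hp.trans_le hpu
  apply le_antisymm
  · refine mNorm_le_of_forall d u p j _ fun ν k hν hk => ?_
    rw [mterm]
    have h1 : (2:ℝ≥0∞) ^ ((d:ℝ) * ((j:ℝ) - (ν:ℝ)) * (1/u - 1/p)) ≤ 1 := by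
      have hle : (d:ℝ) * ((j:ℝ) - (ν:ℝ)) * (1/u - 1/p) ≤ 0 := by
        apply mul_nonpos_of_nonneg_of_nonpos
        · exact mul_nonneg (Nat.cast_nonneg d) (sub_nonneg.2 (by exact_mod_cast hν))
        · have : 1/u ≤ 1/p := one_div_le_one_div_of_le hp hpu
          linarith
      calc (2:ℝ≥0∞) ^ ((d:ℝ) * ((j:ℝ) - (ν:ℝ)) * (1/u - 1/p))
          ≤ (2:ℝ≥0∞) ^ (0:ℝ) := ENNReal.rpow_le_rpow_of_exponent_le one_le_two hle
        _ = 1 := ENNReal.rpow_zero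
    have hpt : ∀ m : Fin d → ℤ,
        ((‖(if m = 0 then (1:ℂ) else 0)‖₊ : ℝ≥0∞)) ^ p = if m = 0 then 1 else 0 := by
      intro m
      by_cases hm : m = 0
      · simp [hm]
      · simp [hm, ENNReal.zero_rpow_of_pos hp]
    have h2 : (∑' m : {m : Fin d → ℤ // cubeSub d j ν m k},
        ((‖(if m.1 = 0 then (1:ℂ) else 0)‖₊ : ℝ≥0∞)) ^ p) ≤ 1 := by
      calc (∑' m : {m : Fin d → ℤ // cubeSub d j ν m k},
            ((‖(if m.1 = 0 then (1:ℂ) else 0)‖₊ : ℝ≥0∞)) ^ p)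
          ≤ ∑' m : Fin d → ℤ, ((‖(if m = 0 then (1:ℂ) else 0)‖₊ : ℝ≥0∞)) ^ p :=
            ENNReal.tsum_comp_le_tsum_of_injective Subtype.val_injective _
        _ = ∑' m : Fin d → ℤ, if m = 0 then 1 else 0 := tsum_congr hpt
        _ = 1 := tsum_ite_eq 0 1
    calc (2:ℝ≥0∞) ^ ((d:ℝ) * ((j:ℝ) - (ν:ℝ)) * (1/u - 1/p)) *
        (∑' m : {m : Fin d → ℤ // cubeSub d j ν m k},
          ((‖(if m.1 = 0 then (1:ℂ) else 0)‖₊ : ℝ≥0∞)) ^ p) ^ (1/p)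
        ≤ 1 * 1 ^ (1/p) := mul_le_mul' h1 (ENNReal.rpow_le_rpow h2 (by positivity))
      _ = 1 := by rw [ENNReal.one_rpow, one_mul]
  · have h0 : inUnitCube d j (0 : Fin d → ℤ) := fun i => ⟨le_rfl, by positivity⟩
    refine le_trans ?_ (mterm_le_mNorm d u p j j 0 le_rfl h0 _)
    rw [mterm, show (d:ℝ) * ((j:ℝ) - (j:ℝ)) * (1/u - 1/p) = 0 by ring,
      ENNReal.rpow_zero, one_mul]
    have hmm : cubeSub d j j (0 : Fin d → ℤ) 0 := by
      intro i
      rw [Nat.sub_self]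
      constructor <;> simp
    have hsingle := ENNReal.le_tsum
      (f := fun m : {m : Fin d → ℤ // cubeSub d j j m 0} =>
        ((‖(if m.1 = 0 then (1:ℂ) else 0)‖₊ : ℝ≥0∞)) ^ p) ⟨0, hmm⟩
    simp only [eq_self_iff_true, if_true, nnnorm_one, ENNReal.coe_one,
      ENNReal.one_rpow] at hsingle
    calc (1:ℝ≥0∞) = 1 ^ (1/p) := (ENNReal.one_rpow _).symm
      _ ≤ _ := ENNReal.rpow_le_rpow hsingle (by positivity)

theorem stmt6 (d : ℕ) (hd : 1 ≤ d) (u1 p1 u2 p2 : ℝ)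
    (hp1 : 0 < p1) (hp1u1 : p1 ≤ u1) (hp2 : 0 < p2) (hp2u2 : p2 ≤ u2) (j : ℕ)
    (h : (p2 ≤ p1 ∧ u1 ≤ u2) ∨ (p1 < p2 ∧ p2 / u2 ≤ p1 / u1)) :
    opNorm (mNorm d u1 p1 j) (mNorm d u2 p2 j) = 1 := by
  apply le_antisymm
  · apply sInf_le
    intro x
    rw [one_mul]
    exact mNorm_anti d u1 p1 u2 p2 hp1 hp1u1 hp2 hp2u2 j h x
  · refine le_sInf fun C hC => ?_
    have hx := hC (fun m => if m = 0 then 1 else 0)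
    rw [mNorm_delta d u1 p1 hp1 hp1u1 j, mNorm_delta d u2 p2 hp2 hp2u2 j, mul_one] at hx
    exact hx
end

section
/- Let d ≥ 1 be an integer and 0 < p_i ≤ u_i < ∞ for i = 1, 2, with p1 < p2 and p2/u2 > p1/u1. Then there exists a constant c with 0 < c ≤ 1, independent of j, such that for all j ∈ ℕ₀: c · 2^{jd(1/u2 − p1/(u1·p2))} ≤ ‖id_j : m^{2^{jd}}_{u1,p1} → m^{2^{jd}}_{u2,p2}‖ ≤ 2^{jd(1/u2 − p1/(u1·p2))}. -/
open scoped ENNReal NNReal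

/-!
Upper bound: taking the cube `Q_{j,m}` itself shows that every coefficient is bounded by
`N = ‖λ | m_{u₁,p₁}‖`, so on a cube `Q_{ν,k}` one has `∑ |λ|^{p₂} ≤ N^{p₂-p₁} ∑ |λ|^{p₁}`.
Bounding `∑ |λ|^{p₁}` by the `m_{u₁,p₁}` term of the same cube leaves the factor
`2^{d(j-ν)(1/u₂ - p₁/(u₁p₂))}`, which is largest at `ν = 0` because `p₁/u₁ < p₂/u₂`.

Lower bound: test on the indicator of the lattice `2^a ℤ^d` with `a = ⌈j p₁/u₁⌉`. A cube of
side `2^{-ν}` contains at most `2^{d(j-ν-a)₊}` lattice points, so the `m_{u₁,p₁}`-norm is at most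
`1`, while `Q` contains `2^{d(j-a)}` of them, so the `m_{u₂,p₂}`-norm is at least
`2^{dj/u₂ - da/p₂}`; rounding `a` up costs the constant `2^{-d/p₂}`.
-/

open Finset

theorem ENNReal.tsum_rpow_le_mul_tsum_rpow {ι : Type*} {f : ι → ℝ≥0∞} {N : ℝ≥0∞} {p q : ℝ}
    (hp : 0 ≤ p) (hpq : p ≤ q) (hf : ∀ i, f i ≤ N) :
    ∑' i, f i ^ q ≤ N ^ (q - p) * ∑' i, f i ^ p := by
  rw [← ENNReal.tsum_mul_left]
  refine ENNReal.tsum_le_tsum fun i => ?_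
  calc f i ^ q = f i ^ (q - p) * f i ^ p := by
        rw [← ENNReal.rpow_add_of_nonneg _ _ (sub_nonneg.2 hpq) hp, sub_add_cancel]
    _ ≤ N ^ (q - p) * f i ^ p := by gcongr; exact hf i

theorem ENNReal.two_rpow_mul_two_rpow (x y : ℝ) : (2 : ℝ≥0∞) ^ x * 2 ^ y = 2 ^ (x + y) :=
  (ENNReal.rpow_add x y two_ne_zero ENNReal.ofNat_ne_top).symm

theorem Int.card_Ico_add_filter_dvd_le (a L : ℤ) {r : ℤ} (hr : 0 < r) (hL : 0 ≤ L) :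
    (#{x ∈ Ico a (a + L) | r ∣ x} : ℤ) ≤ ⌈(L : ℚ) / r⌉ := by
  rw [Int.Ico_filter_dvd_card _ _ hr]
  refine max_le ?_ (Int.ceil_nonneg (by positivity))
  have h := Int.ceil_add_le ((a : ℚ) / r) ((L : ℚ) / r)
  rw [← add_div] at h
  push_cast
  linarith

theorem Int.ceil_two_pow_div_two_pow (n a : ℕ) : ⌈(2 : ℚ) ^ n / 2 ^ a⌉ = 2 ^ (n - a) := by
  rcases le_total a n with h | h
  · rw [div_eq_mul_inv, ← pow_sub₀ _ two_ne_zero h]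
    exact_mod_cast Int.ceil_intCast ((2 : ℤ) ^ (n - a))
  · rw [Nat.sub_eq_zero_of_le h, pow_zero, Int.ceil_eq_iff]
    constructor
    · norm_num
    · push_cast
      exact div_le_one_of_le₀ (pow_le_pow_right₀ one_le_two h) (by positivity)

theorem card_Ico_filter_two_pow_dvd_le (K : ℤ) (n a : ℕ) :
    #{x ∈ Ico (K * 2 ^ n) ((K + 1) * 2 ^ n) | (2 : ℤ) ^ a ∣ x} ≤ 2 ^ (n - a) := by
  have h := Int.card_Ico_add_filter_dvd_le (K * 2 ^ n) (2 ^ n) (r := 2 ^ a) (by positivity)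
    (by positivity)
  rw [← add_one_mul, Int.cast_pow, Int.cast_pow, Int.cast_ofNat,
    Int.ceil_two_pow_div_two_pow] at h
  exact_mod_cast h

theorem card_Ico_zero_filter_two_pow_dvd (n a : ℕ) :
    #{x ∈ Ico (0 : ℤ) (2 ^ n) | (2 : ℤ) ^ a ∣ x} = 2 ^ (n - a) := by
  have hcard := Int.Ico_filter_dvd_card (0 : ℤ) (2 ^ n) (r := 2 ^ a) (by positivity)
  push_cast at hcard
  rw [Int.ceil_two_pow_div_two_pow] at hcard
  simp only [zero_div, Int.ceil_zero, sub_zero] at hcard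
  exact_mod_cast hcard.trans (max_eq_left (by positivity))

section OpNorm

variable {Λ : Type*} {N₁ N₂ : Λ → ℝ≥0∞}

theorem opNorm_le {C : ℝ≥0∞} (h : ∀ x, N₂ x ≤ C * N₁ x) : opNorm N₁ N₂ ≤ C :=
  sInf_le h

theorem le_opNorm {x : Λ} (hx : N₁ x ≤ 1) : N₂ x ≤ opNorm N₁ N₂ :=
  le_sInf fun _ hC => (hC x).trans (mul_le_of_le_one_right' hx)

end OpNorm

section MorreyNorm

variable {d : ℕ}

noncomputable def cubeSum (p : ℝ) (j ν : ℕ) (k : Fin d → ℤ) (lam : (Fin d → ℤ) → ℂ) : ℝ≥0∞ :=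
  ∑' m : {m : Fin d → ℤ // cubeSub d j ν m k}, (‖lam m.1‖₊ : ℝ≥0∞) ^ p

variable {u p : ℝ} {j ν : ℕ} {k : Fin d → ℤ} {lam : (Fin d → ℤ) → ℂ}

theorem le_mNorm (hν : ν ≤ j) (hk : inUnitCube d ν k) :
    2 ^ ((d : ℝ) * (j - ν) * (1 / u - 1 / p)) * cubeSum p j ν k lam ^ (1 / p) ≤
      mNorm d u p j lam :=
  le_iSup (fun νk : {νk : ℕ × (Fin d → ℤ) // νk.1 ≤ j ∧ inUnitCube d νk.1 νk.2} =>
    (2 : ℝ≥0∞) ^ ((d : ℝ) * (j - νk.1.1) * (1 / u - 1 / p)) *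
      cubeSum p j νk.1.1 νk.1.2 lam ^ (1 / p)) ⟨(ν, k), hν, hk⟩

theorem mNorm_le {C : ℝ≥0∞}
    (h : ∀ ν k, ν ≤ j → inUnitCube d ν k →
      2 ^ ((d : ℝ) * (j - ν) * (1 / u - 1 / p)) * cubeSum p j ν k lam ^ (1 / p) ≤ C) :
    mNorm d u p j lam ≤ C :=
  iSup_le fun νk => h _ _ νk.2.1 νk.2.2

theorem cubeSub_self_iff {m m' : Fin d → ℤ} : cubeSub d j j m' m ↔ m' = m := by
  simp only [cubeSub, Nat.sub_self, pow_zero, mul_one, funext_iff]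
  exact forall_congr' fun i => by omega

theorem cubeSum_self (m : Fin d → ℤ) : cubeSum p j j m lam = (‖lam m‖₊ : ℝ≥0∞) ^ p := by
  rw [cubeSum, tsum_eq_single ⟨m, cubeSub_self_iff.2 rfl⟩]
  exact fun m' hm' => absurd (Subtype.ext (cubeSub_self_iff.1 m'.2)) hm'

theorem nnnorm_le_mNorm (hp : 0 < p) {m : Fin d → ℤ} (hm : inUnitCube d j m) :
    (‖lam m‖₊ : ℝ≥0∞) ≤ mNorm d u p j lam := by
  have h := le_mNorm (u := u) (p := p) (lam := lam) le_rfl hm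
  rwa [cubeSum_self, ← ENNReal.rpow_mul, mul_one_div_cancel hp.ne', ENNReal.rpow_one, sub_self,
    mul_zero, zero_mul, ENNReal.rpow_zero, one_mul] at h

theorem inUnitCube_of_cubeSub (hν : ν ≤ j) (hk : inUnitCube d ν k) {m : Fin d → ℤ}
    (hm : cubeSub d j ν m k) : inUnitCube d j m := by
  intro i
  obtain ⟨hm₁, hm₂⟩ := hm i
  obtain ⟨hk₁, hk₂⟩ := hk i
  have hpow : (2 : ℤ) ^ j = 2 ^ ν * 2 ^ (j - ν) := by rw [← pow_add, Nat.add_sub_cancel' hν]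
  have hpos : (0 : ℤ) < 2 ^ (j - ν) := by positivity
  constructor
  · nlinarith
  · nlinarith

end MorreyNorm

section Embedding

variable {d : ℕ} {j : ℕ} {u₁ p₁ u₂ p₂ : ℝ} {lam : (Fin d → ℤ) → ℂ}

theorem cubeSum_le_mNorm_rpow_mul {ν : ℕ} {k : Fin d → ℤ} (hν : ν ≤ j) (hk : inUnitCube d ν k)
    (hp₁ : 0 < p₁) (hp₁₂ : p₁ ≤ p₂) :
    cubeSum p₂ j ν k lam ≤ mNorm d u₁ p₁ j lam ^ (p₂ - p₁) * cubeSum p₁ j ν k lam :=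
  ENNReal.tsum_rpow_le_mul_tsum_rpow hp₁.le hp₁₂ fun m =>
    nnnorm_le_mNorm hp₁ (inUnitCube_of_cubeSub hν hk m.2)

theorem mNorm_le_two_rpow_mul_mNorm (hp₁ : 0 < p₁) (hp₂ : 0 < p₂) (hp₁₂ : p₁ ≤ p₂)
    (hγ : 0 ≤ 1 / u₂ - p₁ / (u₁ * p₂)) :
    mNorm d u₂ p₂ j lam ≤
      2 ^ (((j : ℝ) * d) * (1 / u₂ - p₁ / (u₁ * p₂))) * mNorm d u₁ p₁ j lam := by
  set N := mNorm d u₁ p₁ j lam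
  refine mNorm_le fun ν k hν hk => ?_
  set E : ℝ := (d : ℝ) * (j - ν)
  set α : ℝ := E * (1 / u₁ - 1 / p₁)
  set t : ℝ := p₁ / p₂
  have ht : 0 ≤ t := by positivity
  have ht' : 0 ≤ 1 - t := by rw [sub_nonneg]; exact div_le_one_of_le₀ hp₁₂ hp₂.le
  have hS₁ : cubeSum p₁ j ν k lam ^ (1 / p₁) ≤ 2 ^ (-α) * N := by
    calc cubeSum p₁ j ν k lam ^ (1 / p₁)
        = 2 ^ (-α) * (2 ^ α * cubeSum p₁ j ν k lam ^ (1 / p₁)) := by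
          rw [← mul_assoc, ENNReal.two_rpow_mul_two_rpow, neg_add_cancel, ENNReal.rpow_zero,
            one_mul]
      _ ≤ 2 ^ (-α) * N := by gcongr; exact le_mNorm hν hk
  have hS₂ : cubeSum p₂ j ν k lam ^ (1 / p₂) ≤ 2 ^ (-α * t) * N := by
    calc cubeSum p₂ j ν k lam ^ (1 / p₂)
        ≤ (N ^ (p₂ - p₁) * cubeSum p₁ j ν k lam) ^ (1 / p₂) := by
          gcongr; exact cubeSum_le_mNorm_rpow_mul hν hk hp₁ hp₁₂
      _ = N ^ (1 - t) * (cubeSum p₁ j ν k lam ^ (1 / p₁)) ^ t := by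
          rw [ENNReal.mul_rpow_of_nonneg _ _ (by positivity), ← ENNReal.rpow_mul,
            ← ENNReal.rpow_mul]
          congr 2 <;> simp only [t] <;> field_simp
      _ ≤ N ^ (1 - t) * (2 ^ (-α) * N) ^ t := by gcongr
      _ = 2 ^ (-α * t) * N := by
          rw [ENNReal.mul_rpow_of_nonneg _ _ ht, ← ENNReal.rpow_mul, mul_left_comm,
            ← ENNReal.rpow_add_of_nonneg _ _ ht' ht, sub_add_cancel, ENNReal.rpow_one]
  have hE : E ≤ j * d := by
    have : (0 : ℝ) ≤ ν := Nat.cast_nonneg ν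
    nlinarith [(Nat.cast_nonneg d : (0 : ℝ) ≤ d)]
  calc 2 ^ (E * (1 / u₂ - 1 / p₂)) * cubeSum p₂ j ν k lam ^ (1 / p₂)
      ≤ 2 ^ (E * (1 / u₂ - 1 / p₂)) * (2 ^ (-α * t) * N) := by gcongr
    _ = 2 ^ (E * (1 / u₂ - p₁ / (u₁ * p₂))) * N := by
        rw [← mul_assoc, ENNReal.two_rpow_mul_two_rpow]
        congr 2
        simp only [α, t]
        field_simp
        ring
    _ ≤ 2 ^ (((j : ℝ) * d) * (1 / u₂ - p₁ / (u₁ * p₂))) * N := by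
        gcongr
        exact one_le_two

end Embedding

section Grid

variable {d : ℕ}

noncomputable def dyadicBox (n : ℕ) (k : Fin d → ℤ) : Finset (Fin d → ℤ) :=
  Fintype.piFinset fun i => Ico (k i * 2 ^ n) ((k i + 1) * 2 ^ n)

-- Not cut off outside `Q`: `mNorm` only reads coordinates inside `Q`.
def gridIndicator (a : ℕ) (m : Fin d → ℤ) : ℂ :=
  if ∀ i, (2 : ℤ) ^ a ∣ m i then 1 else 0

variable {u p : ℝ} {j ν : ℕ} {k : Fin d → ℤ}

theorem mem_dyadicBox_iff {m : Fin d → ℤ} : m ∈ dyadicBox (j - ν) k ↔ cubeSub d j ν m k := by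
  simp only [dyadicBox, Fintype.mem_piFinset, mem_Ico, cubeSub]

theorem cubeSum_eq_sum_dyadicBox (lam : (Fin d → ℤ) → ℂ) :
    cubeSum p j ν k lam = ∑ m ∈ dyadicBox (j - ν) k, (‖lam m‖₊ : ℝ≥0∞) ^ p := by
  rw [cubeSum, ← Finset.tsum_subtype]
  exact ((Equiv.subtypeEquivRight (p := (· ∈ dyadicBox (j - ν) k))
    fun _ => mem_dyadicBox_iff).tsum_eq fun m => (‖lam m.1‖₊ : ℝ≥0∞) ^ p).symm

theorem cubeSum_gridIndicator (hp : 0 < p) (a : ℕ) :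
    cubeSum p j ν k (gridIndicator a) =
      ∏ i, (#{x ∈ Ico (k i * 2 ^ (j - ν)) ((k i + 1) * 2 ^ (j - ν)) | (2 : ℤ) ^ a ∣ x} :
        ℝ≥0∞) := by
  have hterm : ∀ m : Fin d → ℤ, (‖gridIndicator a m‖₊ : ℝ≥0∞) ^ p =
      if ∀ i, (2 : ℤ) ^ a ∣ m i then 1 else 0 := fun m => by
    unfold gridIndicator
    split_ifs <;> simp [ENNReal.zero_rpow_of_pos hp]
  have hgrid : {m ∈ dyadicBox (j - ν) k | ∀ i, (2 : ℤ) ^ a ∣ m i} = Fintype.piFinset fun i =>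
      {x ∈ Ico (k i * 2 ^ (j - ν)) ((k i + 1) * 2 ^ (j - ν)) | (2 : ℤ) ^ a ∣ x} := by
    ext m
    simp only [dyadicBox, mem_filter, Fintype.mem_piFinset, forall_and]
  rw [cubeSum_eq_sum_dyadicBox, sum_congr rfl fun m _ => hterm m, sum_boole, hgrid,
    Fintype.card_piFinset]
  push_cast
  rfl

theorem mNorm_gridIndicator_le_one (hp : 0 < p) (hpu : p ≤ u) {a : ℕ} (ha : j * (p / u) ≤ a) :
    mNorm d u p j (gridIndicator a) ≤ 1 := by
  refine mNorm_le fun ν k hν _ => ?_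
  set n := j - ν
  have hsum : cubeSum p j ν k (gridIndicator a) ≤ 2 ^ (((n - a) * d : ℕ) : ℝ) := by
    rw [cubeSum_gridIndicator hp, ENNReal.rpow_natCast, pow_mul]
    calc ∏ i, (#{x ∈ Ico (k i * 2 ^ n) ((k i + 1) * 2 ^ n) | (2 : ℤ) ^ a ∣ x} : ℝ≥0∞)
        ≤ ∏ _i : Fin d, (2 : ℝ≥0∞) ^ (n - a) :=
          prod_le_prod' fun i _ => by exact_mod_cast card_Ico_filter_two_pow_dvd_le (k i) n a
      _ = (2 ^ (n - a)) ^ d := by rw [prod_const, card_univ, Fintype.card_fin]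
  have hn : (j : ℝ) - ν = n := (Nat.cast_sub hν).symm
  have hu : 0 < u := hp.trans_le hpu
  have hna : ((n - a : ℕ) : ℝ) ≤ n * (1 - p / u) := by
    have hnj : (n : ℝ) ≤ j := by exact_mod_cast Nat.sub_le j ν
    have hpu' : p / u ≤ 1 := (div_le_one hu).2 hpu
    rcases le_total a n with h | h
    · rw [Nat.cast_sub h]
      nlinarith [mul_le_mul_of_nonneg_right hnj (div_nonneg hp.le hu.le)]
    · rw [Nat.sub_eq_zero_of_le h, Nat.cast_zero]
      exact mul_nonneg (Nat.cast_nonneg n) (sub_nonneg.2 hpu')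
  have hexp : (d : ℝ) * (j - ν) * (1 / u - 1 / p) + (((n - a) * d : ℕ) : ℝ) * (1 / p) ≤ 0 := by
    have hd : (0 : ℝ) ≤ d / p := by positivity
    have key : (d : ℝ) * n * (1 / u - 1 / p) + ((n - a : ℕ) : ℝ) * d * (1 / p) =
        d / p * (((n - a : ℕ) : ℝ) - n * (1 - p / u)) := by
      field_simp
      ring
    rw [hn, Nat.cast_mul, key]
    exact mul_nonpos_of_nonneg_of_nonpos hd (sub_nonpos.2 hna)
  calc 2 ^ ((d : ℝ) * (j - ν) * (1 / u - 1 / p)) * cubeSum p j ν k (gridIndicator a) ^ (1 / p)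
      ≤ 2 ^ ((d : ℝ) * (j - ν) * (1 / u - 1 / p)) * (2 ^ (((n - a) * d : ℕ) : ℝ)) ^ (1 / p) := by
        gcongr
    _ ≤ 1 := by
        rw [← ENNReal.rpow_mul, ENNReal.two_rpow_mul_two_rpow]
        simpa using ENNReal.rpow_le_rpow_of_exponent_le one_le_two hexp

theorem two_rpow_le_mNorm_gridIndicator (hp : 0 < p) (a : ℕ) :
    2 ^ ((d : ℝ) * j * (1 / u - 1 / p) + (((j - a) * d : ℕ) : ℝ) * (1 / p)) ≤
      mNorm d u p j (gridIndicator a) := by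
  have h := le_mNorm (u := u) (p := p) (lam := gridIndicator a) (Nat.zero_le j)
    (k := (0 : Fin d → ℤ)) fun _ => ⟨le_rfl, by positivity⟩
  rw [cubeSum_gridIndicator hp] at h
  simp only [Pi.zero_apply, zero_mul, zero_add, one_mul, Nat.sub_zero,
    card_Ico_zero_filter_two_pow_dvd, Nat.cast_pow, Nat.cast_ofNat, prod_const, card_univ,
    Fintype.card_fin, Nat.cast_zero, sub_zero] at h
  rwa [← pow_mul, ← ENNReal.rpow_natCast, ← ENNReal.rpow_mul, ENNReal.two_rpow_mul_two_rpow] at h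

end Grid

theorem two_rpow_le_opNorm_mNorm {d : ℕ} {u₁ p₁ u₂ p₂ : ℝ} (hp₁ : 0 < p₁) (hp₁u₁ : p₁ ≤ u₁)
    (hp₂ : 0 < p₂) (j : ℕ) :
    2 ^ (-(d : ℝ) / p₂) * 2 ^ (((j : ℝ) * d) * (1 / u₂ - p₁ / (u₁ * p₂))) ≤
      opNorm (mNorm d u₁ p₁ j) (mNorm d u₂ p₂ j) := by
  have hu₁ : 0 < u₁ := hp₁.trans_le hp₁u₁
  set a := ⌈(j : ℝ) * (p₁ / u₁)⌉₊
  have ha : (j : ℝ) * (p₁ / u₁) ≤ a := Nat.le_ceil _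
  have ha' : (a : ℝ) ≤ j * (p₁ / u₁) + 1 := (Nat.ceil_lt_add_one (by positivity)).le
  have haj : a ≤ j := Nat.ceil_le.2 <|
    mul_le_of_le_one_right (Nat.cast_nonneg j) ((div_le_one hu₁).2 hp₁u₁)
  refine le_trans ?_ ((two_rpow_le_mNorm_gridIndicator hp₂ a).trans
    (le_opNorm (mNorm_gridIndicator_le_one hp₁ hp₁u₁ ha)))
  rw [ENNReal.two_rpow_mul_two_rpow]
  refine ENNReal.rpow_le_rpow_of_exponent_le one_le_two ?_
  rw [Nat.cast_mul, Nat.cast_sub haj]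
  have hd : (0 : ℝ) ≤ d / p₂ := by positivity
  have key : (d : ℝ) * j * (1 / u₂ - 1 / p₂) + (j - a) * d * (1 / p₂) -
      (-(d : ℝ) / p₂ + j * d * (1 / u₂ - p₁ / (u₁ * p₂))) = d / p₂ * (j * (p₁ / u₁) + 1 - a) := by
    field_simp
    ring
  nlinarith [mul_nonneg hd (sub_nonneg.2 ha')]

theorem stmt8_general (d : ℕ) (u1 p1 u2 p2 : ℝ)
    (hp1 : 0 < p1) (hp1u1 : p1 ≤ u1) (hp2 : 0 < p2) (hp2u2 : p2 ≤ u2)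
    (h1 : p1 < p2) (h2 : p2 / u2 > p1 / u1) :
    ∃ c : ℝ, 0 < c ∧ c ≤ 1 ∧ ∀ j : ℕ,
      ENNReal.ofReal c * (2 : ℝ≥0∞) ^ (((j : ℝ) * d) * (1 / u2 - p1 / (u1 * p2))) ≤
          opNorm (mNorm d u1 p1 j) (mNorm d u2 p2 j) ∧
        opNorm (mNorm d u1 p1 j) (mNorm d u2 p2 j) ≤
          (2 : ℝ≥0∞) ^ (((j : ℝ) * d) * (1 / u2 - p1 / (u1 * p2))) := by
  have hu1 : 0 < u1 := hp1.trans_le hp1u1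
  have hu2 : 0 < u2 := hp2.trans_le hp2u2
  have hγ : 0 ≤ 1 / u2 - p1 / (u1 * p2) := by
    have : 1 / u2 - p1 / (u1 * p2) = (p2 / u2 - p1 / u1) / p2 := by field_simp
    rw [this]
    exact div_nonneg (sub_nonneg.2 h2.le) hp2.le
  refine ⟨2 ^ (-(d : ℝ) / p2), by positivity,
    Real.rpow_le_one_of_one_le_of_nonpos one_le_two
      (div_nonpos_of_nonpos_of_nonneg (neg_nonpos.2 (Nat.cast_nonneg d)) hp2.le),
    fun j => ⟨?_, opNorm_le fun _ => mNorm_le_two_rpow_mul_mNorm hp1 hp2 h1.le hγ⟩⟩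
  rw [← ENNReal.ofReal_rpow_of_pos two_pos, ENNReal.ofReal_ofNat]
  exact two_rpow_le_opNorm_mNorm hp1 hp1u1 hp2 j

theorem stmt8 (d : ℕ) (hd : 1 ≤ d) (u1 p1 u2 p2 : ℝ)
    (hp1 : 0 < p1) (hp1u1 : p1 ≤ u1) (hp2 : 0 < p2) (hp2u2 : p2 ≤ u2)
    (h1 : p1 < p2) (h2 : p2 / u2 > p1 / u1) :
    ∃ c : ℝ, 0 < c ∧ c ≤ 1 ∧ ∀ j : ℕ,
      ENNReal.ofReal c * (2 : ℝ≥0∞) ^ (((j : ℝ) * d) * (1 / u2 - p1 / (u1 * p2))) ≤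
          opNorm (mNorm d u1 p1 j) (mNorm d u2 p2 j) ∧
        opNorm (mNorm d u1 p1 j) (mNorm d u2 p2 j) ≤
          (2 : ℝ≥0∞) ^ (((j : ℝ) * d) * (1 / u2 - p1 / (u1 * p2))) :=
  stmt8_general d u1 p1 u2 p2 hp1 hp1u1 hp2 hp2u2 h1 h2
end

section
/- Let E be a complex vector space of finite dimension N ≥ 1, equipped with a quasi-norm ‖·‖, i.e. a function E → [0,∞) with ‖x‖ = 0 iff x = 0, ‖αx‖ = |α|·‖x‖ for all α ∈ ℂ and x ∈ E, and ‖x + y‖ ≤ K(‖x‖ + ‖y‖) for all x, y ∈ E, for some fixed constant K ≥ 1. Then there exist constants c1, c2 > 0, depending only on K, such that the entropy numbers of the identity map id : E → E satisfy: c1 ≤ e_k(id) ≤ c2 for all k ∈ ℕ with k ≤ 2N, and c1 · 2^{−(k−1)/(2N)} ≤ e_k(id) ≤ c2 · 2^{−(k−1)/(2N)} for all k ∈ ℕ with k > 2N. -/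
open scoped ENNReal NNReal

/-- Real-valued entropy numbers of the identity between two quasi-norms on one ambient
group. -/
noncomputable def entropyNumberR {Λ : Type*} [AddCommGroup Λ] (N₁ N₂ : Λ → ℝ) (k : ℕ) : ℝ :=
  sInf {ε : ℝ | 0 < ε ∧ ∃ c : Fin (2 ^ (k - 1)) → Λ,
    ∀ x : Λ, N₁ x ≤ 1 → ∃ i, N₂ (x - c i) ≤ ε}


/-! Both bounds compare volumes for a Haar measure on `E ≅ ℝ^{2N}`: the unit ball `B` of the
quasi-norm has positive finite volume and `vol (r • B) = r^{2N} vol B`. If `B` is covered by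
`2^{k-1}` translates of `ε • B`, then `1 ≤ 2^{k-1} ε^{2N}`, which is the lower bound. Conversely a
maximal `ε`-separated subset of `B` is an `ε`-net, and the translates of `δ • B`, `δ = ε / (4K²)`,
centred at its points are disjoint and lie in `2K • B`, so it has at most `(8K³/ε)^{2N}` points;
this is the upper bound. -/

open MeasureTheory Set Metric Filter Topology Pointwise

structure IsQuasiNorm {V : Type*} [AddCommGroup V] [Module ℝ V] (K : ℝ) (q : V → ℝ) : Prop where
  nonneg : ∀ x, 0 ≤ q x
  eq_zero_iff : ∀ x, q x = 0 ↔ x = 0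
  smul : ∀ (r : ℝ) x, q (r • x) = |r| * q x
  add_le : ∀ x y, q (x + y) ≤ K * (q x + q y)

namespace IsQuasiNorm

section Algebra

variable {V W : Type*} [AddCommGroup V] [Module ℝ V] [AddCommGroup W] [Module ℝ W]
  {K : ℝ} {q : V → ℝ}

theorem map_zero (hq : IsQuasiNorm K q) : q 0 = 0 := (hq.eq_zero_iff 0).2 rfl

theorem map_neg (hq : IsQuasiNorm K q) (x : V) : q (-x) = q x := by
  simpa using hq.smul (-1) x

theorem map_sub_comm (hq : IsQuasiNorm K q) (x y : V) : q (x - y) = q (y - x) := by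
  rw [← neg_sub, hq.map_neg]

theorem sub_le (hq : IsQuasiNorm K q) (x y : V) : q (x - y) ≤ K * (q x + q y) := by
  simpa [sub_eq_add_neg, hq.map_neg] using hq.add_le x (-y)

theorem smul_setOf_le_one (hq : IsQuasiNorm K q) {r : ℝ} (hr : 0 < r) :
    r • {x | q x ≤ 1} = {x | q x ≤ r} := by
  ext x
  rw [mem_smul_set_iff_inv_smul_mem₀ hr.ne', mem_ofPred, mem_ofPred, hq.smul,
    abs_of_pos (inv_pos.2 hr), inv_mul_le_one₀ hr]

theorem mem_vadd_smul_setOf_le_one (hq : IsQuasiNorm K q) {r : ℝ} (hr : 0 < r) (c x : V) :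
    x ∈ c +ᵥ r • {y | q y ≤ 1} ↔ q (x - c) ≤ r := by
  rw [mem_vadd_set_iff_neg_vadd_mem, hq.smul_setOf_le_one hr, vadd_eq_add, neg_add_eq_sub]
  rfl

theorem sum_le (hq : IsQuasiNorm K q) (hK : 1 ≤ K) {ι : Type*} (s : Finset ι) (f : ι → V) :
    q (∑ i ∈ s, f i) ≤ K ^ s.card * ∑ i ∈ s, q (f i) := by
  induction s using Finset.cons_induction with
  | empty => simp [hq.map_zero]
  | cons a s ha ih =>
    rw [Finset.sum_cons, Finset.sum_cons, Finset.card_cons, pow_succ']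
    have hKs : 1 ≤ K ^ s.card := one_le_pow₀ hK
    calc q (f a + ∑ i ∈ s, f i) ≤ K * (q (f a) + q (∑ i ∈ s, f i)) := hq.add_le _ _
      _ ≤ K * (K ^ s.card * q (f a) + K ^ s.card * ∑ i ∈ s, q (f i)) := by
        gcongr
        exact le_mul_of_one_le_left (hq.nonneg _) hKs
      _ = K * K ^ s.card * (q (f a) + ∑ i ∈ s, q (f i)) := by ring

theorem comp_linearEquiv (hq : IsQuasiNorm K q) (e : W ≃ₗ[ℝ] V) : IsQuasiNorm K (q ∘ e) where
  nonneg x := hq.nonneg (e x)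
  eq_zero_iff x := by simp [hq.eq_zero_iff]
  smul r x := by simp [hq.smul]
  add_le x y := by simpa using hq.add_le (e x) (e y)

end Algebra

end IsQuasiNorm

theorem Finset.exists_card_le_forall_exists_not_of_pairwise {α : Type*} {S : Set α}
    {R : α → α → Prop} (hR : ∀ x y, R x y → R y x) (hR' : ∀ x, ¬R x x) {n : ℕ}
    (h : ∀ s : Finset α, ↑s ⊆ S → (s : Set α).Pairwise R → s.card ≤ n) :
    ∃ t : Finset α, t.card ≤ n ∧ ∀ x ∈ S, ∃ y ∈ t, ¬R x y := by
  classical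
  let P m := ∃ s : Finset α, ↑s ⊆ S ∧ (s : Set α).Pairwise R ∧ s.card = m
  obtain ⟨t, htS, htR, htcard⟩ : P (Nat.findGreatest P n) :=
    Nat.findGreatest_spec (Nat.zero_le n) ⟨∅, by simp⟩
  refine ⟨t, htcard ▸ Nat.findGreatest_le n, fun x hx ↦ ?_⟩
  by_contra! hfar
  have hxt : x ∉ t := fun hxt ↦ hR' x (hfar x hxt)
  have hinsS : ↑(insert x t) ⊆ S := by
    rw [coe_insert]
    exact Set.insert_subset hx htS
  have hins : (↑(insert x t) : Set α).Pairwise R := by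
    rw [coe_insert]
    exact htR.insert fun y hy _ ↦ ⟨hfar y hy, hR _ _ (hfar y hy)⟩
  have hle : (insert x t).card ≤ Nat.findGreatest P n :=
    Nat.le_findGreatest (h _ hinsS hins) ⟨insert x t, hinsS, hins, rfl⟩
  rw [card_insert_of_notMem hxt] at hle
  omega

section EntropyNumber

variable {Λ Λ' : Type*} [AddCommGroup Λ] [AddCommGroup Λ']

theorem entropyNumberR_le {N₁ N₂ : Λ → ℝ} {k : ℕ} {ε : ℝ} (hε : 0 < ε)
    (c : Fin (2 ^ (k - 1)) → Λ) (hc : ∀ x, N₁ x ≤ 1 → ∃ i, N₂ (x - c i) ≤ ε) :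
    entropyNumberR N₁ N₂ k ≤ ε :=
  csInf_le ⟨0, fun _ h ↦ h.1.le⟩ ⟨hε, c, hc⟩

theorem entropyNumberR_le_of_finset {N₁ N₂ : Λ → ℝ} {k : ℕ} {ε : ℝ} (hε : 0 < ε)
    (s : Finset Λ) (hs : s.card ≤ 2 ^ (k - 1)) (hc : ∀ x, N₁ x ≤ 1 → ∃ y ∈ s, N₂ (x - y) ≤ ε) :
    entropyNumberR N₁ N₂ k ≤ ε := by
  refine entropyNumberR_le hε
    (fun i ↦ if h : (i : ℕ) < s.card then s.equivFin.symm ⟨i, h⟩ else 0) fun x hx ↦ ?_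
  obtain ⟨y, hys, hxy⟩ := hc x hx
  refine ⟨Fin.castLE hs (s.equivFin ⟨y, hys⟩), ?_⟩
  simpa using hxy

theorem entropyNumberR_self_le_one {q : Λ → ℝ} (k : ℕ) : entropyNumberR q q k ≤ 1 :=
  entropyNumberR_le one_pos (fun _ ↦ 0) fun x hx ↦ ⟨⟨0, Nat.two_pow_pos _⟩, by simpa using hx⟩

theorem le_entropyNumberR_self {q : Λ → ℝ} {k : ℕ} {a : ℝ}
    (h : ∀ ε > 0, ∀ c : Fin (2 ^ (k - 1)) → Λ, (∀ x, q x ≤ 1 → ∃ i, q (x - c i) ≤ ε) → a ≤ ε) :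
    a ≤ entropyNumberR q q k :=
  le_csInf ⟨1, one_pos, fun _ ↦ 0, fun x hx ↦ ⟨⟨0, Nat.two_pow_pos _⟩, by simpa using hx⟩⟩
    fun ε ⟨hε, c, hc⟩ ↦ h ε hε c hc

theorem entropyNumberR_comp_addEquiv (N₁ N₂ : Λ → ℝ) (e : Λ' ≃+ Λ) (k : ℕ) :
    entropyNumberR (N₁ ∘ e) (N₂ ∘ e) k = entropyNumberR N₁ N₂ k := by
  unfold entropyNumberR
  congr 1
  ext ε
  refine and_congr_right fun _ ↦ ⟨?_, ?_⟩
  · rintro ⟨c, hc⟩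
    refine ⟨e ∘ c, fun x hx ↦ ?_⟩
    simpa using hc (e.symm x) (by simpa using hx)
  · rintro ⟨c, hc⟩
    refine ⟨e.symm ∘ c, fun x hx ↦ ?_⟩
    simpa using hc (e x) hx

end EntropyNumber

theorem measure_setOf_le_one_ne_zero {V : Type*} [NormedAddCommGroup V] [MeasurableSpace V]
    (μ : Measure V) [μ.IsOpenPosMeasure] {q : V → ℝ} {C : ℝ} (hC₀ : 0 < C)
    (hC : ∀ x, q x ≤ C * ‖x‖) : μ {x | q x ≤ 1} ≠ 0 := by
  refine ((measure_ball_pos μ 0 (inv_pos.2 hC₀)).trans_le (measure_mono fun x hx ↦ ?_)).ne'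
  rw [mem_ball_zero_iff] at hx
  calc q x ≤ C * ‖x‖ := hC x
    _ ≤ C * C⁻¹ := by gcongr
    _ = 1 := mul_inv_cancel₀ hC₀.ne'

theorem measure_setOf_le_one_ne_top {V : Type*} [NormedAddCommGroup V] [ProperSpace V]
    [MeasurableSpace V] (μ : Measure V) [IsFiniteMeasureOnCompacts μ] {q : V → ℝ} {c : ℝ}
    (hc₀ : 0 < c) (hc : ∀ x, c * ‖x‖ ≤ q x) : μ {x | q x ≤ 1} ≠ ⊤ := by
  refine ne_top_of_le_ne_top (measure_closedBall_lt_top (x := (0 : V)) (r := c⁻¹)).ne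
    (measure_mono fun x hx ↦ ?_)
  rw [mem_closedBall_zero_iff, ← one_div, le_div_iff₀' hc₀]
  exact (hc x).trans hx

section HaarMeasure

variable {V : Type*} [NormedAddCommGroup V] [NormedSpace ℝ V] [MeasurableSpace V] [BorelSpace V]
  [FiniteDimensional ℝ V] (μ : Measure V) [μ.IsAddHaarMeasure]

theorem one_le_card_mul_pow_of_subset_iUnion {S : Set V} (hS₀ : μ S ≠ 0) (hS : μ S ≠ ⊤)
    {n : ℕ} {ε : ℝ} (hε : 0 ≤ ε) (c : Fin n → V) (hcov : S ⊆ ⋃ i, c i +ᵥ ε • S) :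
    1 ≤ (n : ℝ) * ε ^ Module.finrank ℝ V := by
  have h : μ S ≤ n * ENNReal.ofReal (ε ^ Module.finrank ℝ V) * μ S :=
    calc μ S ≤ ∑ i, μ (c i +ᵥ ε • S) := (measure_mono hcov).trans (measure_iUnion_fintype_le _ _)
      _ = n * ENNReal.ofReal (ε ^ Module.finrank ℝ V) * μ S := by
        simp [measure_vadd, Measure.addHaar_smul_of_nonneg μ hε, mul_assoc]
  rw [← ENNReal.ofReal_natCast, ← ENNReal.ofReal_mul (by positivity)] at h
  exact ENNReal.one_le_ofReal.1 <| (ENNReal.mul_le_mul_iff_left hS₀ hS).1 (by rwa [one_mul])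

theorem card_mul_pow_le_of_pairwiseDisjoint {S : Set V} (hS₀ : μ S ≠ 0) (hS : μ S ≠ ⊤)
    {s : Finset V} {A : V → Set V} (hA : ∀ x ∈ s, MeasurableSet (A x))
    (hdisj : (s : Set V).PairwiseDisjoint A) {δ R : ℝ} (hδ : 0 ≤ δ) (hR : 0 ≤ R)
    (hsub : ∀ x ∈ s, x +ᵥ δ • S ⊆ A x) (hsup : ∀ x ∈ s, A x ⊆ R • S) :
    (s.card : ℝ) * δ ^ Module.finrank ℝ V ≤ R ^ Module.finrank ℝ V := by
  have h : s.card * ENNReal.ofReal (δ ^ Module.finrank ℝ V) * μ S ≤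
      ENNReal.ofReal (R ^ Module.finrank ℝ V) * μ S :=
    calc s.card * ENNReal.ofReal (δ ^ Module.finrank ℝ V) * μ S = ∑ x ∈ s, μ (x +ᵥ δ • S) := by
          simp [measure_vadd, Measure.addHaar_smul_of_nonneg μ hδ, mul_assoc]
      _ ≤ ∑ x ∈ s, μ (A x) := Finset.sum_le_sum fun x hx ↦ measure_mono (hsub x hx)
      _ = μ (⋃ x ∈ s, A x) := (measure_biUnion_finset hdisj hA).symm
      _ ≤ μ (R • S) := measure_mono (iUnion₂_subset hsup)
      _ = ENNReal.ofReal (R ^ Module.finrank ℝ V) * μ S := Measure.addHaar_smul_of_nonneg μ hR S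
  rw [ENNReal.mul_le_mul_iff_left hS₀ hS, ← ENNReal.ofReal_natCast,
    ← ENNReal.ofReal_mul (by positivity), ENNReal.ofReal_le_ofReal_iff (by positivity)] at h
  exact h

end HaarMeasure

theorem two_rpow_neg_div_pow {d : ℕ} (hd : 0 < d) {k : ℕ} (hk : 0 < k) :
    ((2 : ℝ) ^ (-(((k : ℝ) - 1) / d))) ^ d = ((2 : ℝ) ^ (k - 1))⁻¹ := by
  rw [← Real.rpow_natCast, ← Real.rpow_mul zero_le_two, ← Real.rpow_natCast, ← Real.rpow_neg
    zero_le_two, Nat.cast_sub hk, Nat.cast_one]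
  field_simp

namespace IsQuasiNorm

theorem exists_pos_le_mul_norm {ι : Type*} [Fintype ι] {K : ℝ} {q : (ι → ℝ) → ℝ}
    (hq : IsQuasiNorm K q) (hK : 1 ≤ K) : ∃ C > 0, ∀ x, q x ≤ C * ‖x‖ := by
  classical
  set M := K ^ Fintype.card ι * ∑ i, q (Pi.single i 1)
  have hM : 0 ≤ M := mul_nonneg (by positivity) (Finset.sum_nonneg fun i _ ↦ hq.nonneg _)
  refine ⟨M + 1, by positivity, fun x ↦ ?_⟩
  calc q x = q (∑ i, x i • Pi.single i 1) := by congr 1; ext j; simp [Pi.single_apply]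
    _ ≤ K ^ Fintype.card ι * ∑ i, |x i| * q (Pi.single i 1) := by
      refine (hq.sum_le hK _ _).trans_eq ?_
      simp only [hq.smul, Finset.card_univ]
    _ ≤ K ^ Fintype.card ι * ∑ i, ‖x‖ * q (Pi.single i 1) := by
      gcongr with i
      · exact hq.nonneg _
      · exact norm_le_pi_norm x i
    _ = M * ‖x‖ := by rw [← Finset.mul_sum]; ring
    _ ≤ (M + 1) * ‖x‖ := by gcongr; linarith

section Normed

variable {V : Type*} [NormedAddCommGroup V] [NormedSpace ℝ V] {K : ℝ} {q : V → ℝ}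

theorem exists_pos_mul_norm_le [ProperSpace V] (hq : IsQuasiNorm K q) (hK : 0 ≤ K) {C : ℝ}
    (hC : ∀ x, q x ≤ C * ‖x‖) : ∃ c > 0, ∀ x, c * ‖x‖ ≤ q x := by
  by_contra! h
  choose x hx using fun n : ℕ ↦ h (1 / (n + 1)) (by positivity)
  have hx₀ (n : ℕ) : x n ≠ 0 := by
    rintro h₀
    simpa [h₀, hq.map_zero] using hx n
  set y : ℕ → V := fun n ↦ ‖x n‖⁻¹ • x n
  have hy (n : ℕ) : y n ∈ sphere 0 1 := by simp [y, norm_smul, hx₀]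
  have hqy (n : ℕ) : q (y n) ≤ 1 / (n + 1) := by
    have hn : 0 < ‖x n‖ := norm_pos_iff.2 (hx₀ n)
    rw [hq.smul, abs_of_pos (inv_pos.2 hn), inv_mul_le_iff₀ hn, mul_comm]
    exact (hx n).le
  obtain ⟨a, ha, φ, hφ, hlim⟩ := (isCompact_sphere 0 1).tendsto_subseq hy
  have hbound (n : ℕ) : q a ≤ K * (1 / (φ n + 1) + C * ‖y (φ n) - a‖) :=
    calc q a = q (y (φ n) + (a - y (φ n))) := by rw [add_sub_cancel]
      _ ≤ K * (q (y (φ n)) + q (a - y (φ n))) := hq.add_le _ _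
      _ ≤ K * (1 / (φ n + 1) + C * ‖y (φ n) - a‖) := by
        rw [norm_sub_rev]
        gcongr
        exacts [hqy _, hC _]
  have hlim' : Tendsto (fun n ↦ K * (1 / ((φ n : ℕ) + 1 : ℝ) + C * ‖y (φ n) - a‖)) atTop
      (𝓝 (K * (0 + C * 0))) :=
    ((tendsto_one_div_add_atTop_nhds_zero_nat.comp hφ.tendsto_atTop).add
      ((tendsto_iff_norm_sub_tendsto_zero.1 hlim).const_mul C)).const_mul K
  have ha₀ : q a ≤ 0 := by simpa using ge_of_tendsto' hlim' hbound
  have : a = 0 := (hq.eq_zero_iff a).1 (ha₀.antisymm (hq.nonneg a))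
  simp [this] at ha

theorem exists_sub_le_of_mem_thickening (hq : IsQuasiNorm K q) {C : ℝ} (hC₀ : 0 ≤ C)
    (hC : ∀ x, q x ≤ C * ‖x‖) {δ ρ : ℝ} (hδ : 0 < δ) {x u : V}
    (hu : u ∈ thickening ρ (x +ᵥ δ • {y | q y ≤ 1})) : ∃ z, q (z - x) ≤ δ ∧ q (u - z) ≤ C * ρ := by
  obtain ⟨z, hz, hdist⟩ := mem_thickening_iff.1 hu
  refine ⟨z, (hq.mem_vadd_smul_setOf_le_one hδ x z).1 hz, (hC _).trans ?_⟩
  rw [← dist_eq_norm]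
  gcongr

variable [MeasurableSpace V] [BorelSpace V] [FiniteDimensional ℝ V] (μ : Measure V)
  [μ.IsAddHaarMeasure]

theorem card_le_of_separated (hq : IsQuasiNorm K q) (hK : 1 ≤ K) {C : ℝ} (hC₀ : 0 < C)
    (hC : ∀ x, q x ≤ C * ‖x‖) (hB₀ : μ {x | q x ≤ 1} ≠ 0) (hB : μ {x | q x ≤ 1} ≠ ⊤)
    {ε : ℝ} (hε : 0 < ε) (hε' : ε ≤ 2 * K) {s : Finset V} (hs : ∀ x ∈ s, q x ≤ 1)
    (hsep : (s : Set V).Pairwise fun x y ↦ ε < q (x - y)) :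
    (s.card : ℝ) ≤ (8 * K ^ 3 / ε) ^ Module.finrank ℝ V := by
  have hK₀ : 0 < K := zero_lt_one.trans_le hK
  set δ := ε / (4 * K ^ 2) with hδ_def
  have hδ : 0 < δ := by positivity
  have hδK : K ^ 2 * δ = ε / 4 := by rw [hδ_def]; field_simp
  -- `{x | q x ≤ 1}` need not be measurable, so the disjoint sets are open thickenings of the
  -- translates of `δ • {x | q x ≤ 1}`.
  set A : V → Set V := fun x ↦ thickening (δ / (2 * C)) (x +ᵥ δ • {y | q y ≤ 1})
  have hA (x u : V) (hu : u ∈ A x) : ∃ z, q (z - x) ≤ δ ∧ q (u - z) ≤ δ / 2 := by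
    obtain ⟨z, hzx, huz⟩ := hq.exists_sub_le_of_mem_thickening hC₀.le hC hδ hu
    exact ⟨z, hzx, huz.trans_eq (by field_simp)⟩
  have hdisj : (s : Set V).PairwiseDisjoint A := by
    intro x hx y hy hxy
    refine Set.disjoint_left.2 fun u hux huy ↦ (hsep hx hy hxy).not_ge ?_
    obtain ⟨z, hzx, huz⟩ := hA x u hux
    obtain ⟨z', hzy, huz'⟩ := hA y u huy
    calc q (x - y) = q ((x - z + (z' - y)) + (u - z' - (u - z))) := by congr 1; abel
      _ ≤ K * (K * (q (x - z) + q (z' - y)) + K * (q (u - z') + q (u - z))) := by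
        refine (hq.add_le _ _).trans ?_
        gcongr
        · exact hq.add_le _ _
        · exact hq.sub_le _ _
      _ ≤ K * (K * (δ + δ) + K * (δ / 2 + δ / 2)) := by
        rw [hq.map_sub_comm x z]
        gcongr
      _ = 3 / 4 * ε := by linear_combination 3 * hδK
      _ ≤ ε := by linarith
  have hsup (x : V) (hx : x ∈ s) : A x ⊆ (2 * K) • {y | q y ≤ 1} := by
    intro u hu
    obtain ⟨z, hzx, huz⟩ := hA x u hu
    rw [hq.smul_setOf_le_one (by positivity), mem_ofPred_eq]
    calc q u = q (x + ((z - x) + (u - z))) := by congr 1; abel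
      _ ≤ K * (1 + K * (δ + δ / 2)) := by
        refine (hq.add_le _ _).trans ?_
        gcongr
        · exact hs x hx
        · exact (hq.add_le _ _).trans (by gcongr)
      _ = K + 3 / 8 * ε := by linear_combination 3 / 2 * hδK
      _ ≤ 2 * K := by linarith
  have hpack := card_mul_pow_le_of_pairwiseDisjoint μ hB₀ hB
    (fun x _ ↦ isOpen_thickening.measurableSet) hdisj hδ.le (by positivity)
    (fun x _ ↦ self_subset_thickening (by positivity) _) hsup
  have h8 : 8 * K ^ 3 / ε = 2 * K / δ := by rw [hδ_def]; field_simp; ring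
  rwa [h8, div_pow, le_div_iff₀ (by positivity)]

theorem two_rpow_le_entropyNumberR (hq : IsQuasiNorm K q) (hB₀ : μ {x | q x ≤ 1} ≠ 0)
    (hB : μ {x | q x ≤ 1} ≠ ⊤) (hd : 0 < Module.finrank ℝ V) {k : ℕ} (hk : 0 < k) :
    (2 : ℝ) ^ (-(((k : ℝ) - 1) / Module.finrank ℝ V)) ≤ entropyNumberR q q k := by
  refine le_entropyNumberR_self fun ε hε c hc ↦ ?_
  have hcov : {x | q x ≤ 1} ⊆ ⋃ i, c i +ᵥ ε • {x | q x ≤ 1} := fun x hx ↦ by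
    obtain ⟨i, hi⟩ := hc x hx
    exact mem_iUnion.2 ⟨i, (hq.mem_vadd_smul_setOf_le_one hε _ _).2 hi⟩
  have hvol := one_le_card_mul_pow_of_subset_iUnion μ hB₀ hB hε.le c hcov
  refine (pow_le_pow_iff_left₀ (by positivity) hε.le hd.ne').1 ?_
  rw [two_rpow_neg_div_pow hd hk, inv_le_iff_one_le_mul₀ (by positivity), mul_comm]
  exact_mod_cast hvol

theorem entropyNumberR_le_two_rpow (hq : IsQuasiNorm K q) (hK : 1 ≤ K) {C : ℝ} (hC₀ : 0 < C)
    (hC : ∀ x, q x ≤ C * ‖x‖) (hB₀ : μ {x | q x ≤ 1} ≠ 0) (hB : μ {x | q x ≤ 1} ≠ ⊤)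
    (hd : 0 < Module.finrank ℝ V) {k : ℕ} (hk : 0 < k) :
    entropyNumberR q q k ≤ 8 * K ^ 3 * (2 : ℝ) ^ (-(((k : ℝ) - 1) / Module.finrank ℝ V)) := by
  set ε := 8 * K ^ 3 * (2 : ℝ) ^ (-(((k : ℝ) - 1) / Module.finrank ℝ V))
  have hε : 0 < ε := by positivity
  rcases le_or_gt 1 ε with hε1 | hε1
  · exact (entropyNumberR_self_le_one k).trans hε1
  have hpack (s : Finset V) (hs : ↑s ⊆ {x | q x ≤ 1})
      (hsep : (s : Set V).Pairwise fun x y ↦ ε < q (x - y)) : s.card ≤ 2 ^ (k - 1) := by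
    have h := hq.card_le_of_separated μ hK hC₀ hC hB₀ hB hε (by linarith) (fun x hx ↦ hs hx) hsep
    rwa [div_mul_cancel_left₀ (by positivity), inv_pow, two_rpow_neg_div_pow hd hk, inv_inv,
      ← Nat.cast_ofNat, ← Nat.cast_pow, Nat.cast_le] at h
  obtain ⟨t, ht, hcov⟩ := Finset.exists_card_le_forall_exists_not_of_pairwise
    (fun x y h ↦ hq.map_sub_comm x y ▸ h) (fun x ↦ by simp [hq.map_zero, hε.le]) hpack
  exact entropyNumberR_le_of_finset hε t ht fun x hx ↦ by simpa using hcov x hx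

end Normed

end IsQuasiNorm

theorem IsQuasiNorm.entropyNumberR_bounds {E : Type*} [AddCommGroup E] [Module ℝ E] {K : ℝ}
    {q : E → ℝ} (hq : IsQuasiNorm K q) (hK : 1 ≤ K) (hd : 0 < Module.finrank ℝ E) {k : ℕ}
    (hk : 0 < k) :
    (2 : ℝ) ^ (-(((k : ℝ) - 1) / Module.finrank ℝ E)) ≤ entropyNumberR q q k ∧
      entropyNumberR q q k ≤ 8 * K ^ 3 * (2 : ℝ) ^ (-(((k : ℝ) - 1) / Module.finrank ℝ E)) := by
  set d := Module.finrank ℝ E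
  have : Module.Finite ℝ E := Module.finite_of_finrank_pos hd
  let e : E ≃ₗ[ℝ] (Fin d → ℝ) := LinearEquiv.ofFinrankEq _ _ (by simp [d])
  have hq' := hq.comp_linearEquiv e.symm
  have hqe : (q ∘ e.symm) ∘ e.toAddEquiv = q := by ext; simp
  rw [← hqe, entropyNumberR_comp_addEquiv]
  obtain ⟨C, hC₀, hC⟩ := hq'.exists_pos_le_mul_norm hK
  obtain ⟨c, hc₀, hc⟩ := hq'.exists_pos_mul_norm_le (zero_le_one.trans hK) hC
  have hB₀ := measure_setOf_le_one_ne_zero volume hC₀ hC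
  have hB := measure_setOf_le_one_ne_top volume hc₀ hc
  have hd' : Module.finrank ℝ (Fin d → ℝ) = d := Module.finrank_fin_fun ℝ
  have hdV : 0 < Module.finrank ℝ (Fin d → ℝ) := hd'.symm ▸ hd
  have hlow := hq'.two_rpow_le_entropyNumberR volume hB₀ hB hdV hk
  have hup := hq'.entropyNumberR_le_two_rpow volume hK hC₀ hC hB₀ hB hdV hk
  rw [hd'] at hlow hup
  exact ⟨hlow, hup⟩

theorem stmt11 (K : ℝ) (hK : 1 ≤ K) :
    ∃ c1 c2 : ℝ, 0 < c1 ∧ 0 < c2 ∧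
      ∀ (E : Type) [AddCommGroup E] [Module ℂ E] (N : ℕ), 1 ≤ N →
        Module.finrank ℂ E = N →
        ∀ nrm : E → ℝ,
          (∀ x, 0 ≤ nrm x) →
          (∀ x, nrm x = 0 ↔ x = 0) →
          (∀ (a : ℂ) (x : E), nrm (a • x) = ‖a‖ * nrm x) →
          (∀ x y : E, nrm (x + y) ≤ K * (nrm x + nrm y)) →
          ∀ k : ℕ, 0 < k →
            (k ≤ 2 * N →
              c1 ≤ entropyNumberR nrm nrm k ∧ entropyNumberR nrm nrm k ≤ c2) ∧
            (2 * N < k →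
              c1 * 2 ^ (-(((k : ℝ) - 1) / (2 * N))) ≤ entropyNumberR nrm nrm k ∧
                entropyNumberR nrm nrm k ≤ c2 * 2 ^ (-(((k : ℝ) - 1) / (2 * N)))) := by
  refine ⟨1 / 2, 8 * K ^ 3, by norm_num, by positivity, ?_⟩
  intro E _ _ N hN hrank nrm hpos hzero hhom htri k hk
  have hq : IsQuasiNorm K nrm :=
    ⟨hpos, hzero, fun r x ↦ by rw [← Complex.coe_smul, hhom, Complex.norm_real, Real.norm_eq_abs],
      htri⟩
  have hd : Module.finrank ℝ E = 2 * N := by rw [finrank_real_of_complex, hrank]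
  obtain ⟨hlow, hup⟩ := hq.entropyNumberR_bounds hK (by omega) hk
  rw [hd] at hlow hup
  push_cast at hlow hup
  set θ := ((k : ℝ) - 1) / (2 * N)
  have hθ : 0 ≤ θ := div_nonneg (by simp [Nat.one_le_cast.2 hk]) (by positivity)
  have hpow_pos : 0 < (2 : ℝ) ^ (-θ) := Real.rpow_pos_of_pos two_pos _
  have hpow_le : (2 : ℝ) ^ (-θ) ≤ 1 := Real.rpow_le_one_of_one_le_of_nonpos one_le_two (by linarith)
  refine ⟨fun hkN ↦ ⟨?_, hup.trans (mul_le_of_le_one_right (by positivity) hpow_le)⟩,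
    fun _ ↦ ⟨(mul_le_of_le_one_left hpow_pos.le (by norm_num)).trans hlow, hup⟩⟩
  have hθ1 : θ ≤ 1 := by
    rw [div_le_one (by positivity)]
    have : (k : ℝ) ≤ 2 * N := by exact_mod_cast hkN
    linarith
  calc 1 / 2 = (2 : ℝ) ^ (-1 : ℝ) := by norm_num [Real.rpow_neg_one]
    _ ≤ 2 ^ (-θ) := Real.rpow_le_rpow_of_exponent_le one_le_two (by linarith)
    _ ≤ entropyNumberR nrm nrm k := hlow
end

section
/- Let d ≥ 1 be an integer and 0 < p_i ≤ u_i < ∞ for i = 1, 2, with p1 < p2 and p1/u1 < p2/u2 (so in particular p1 < u1). Then there exists a constant c > 0 such that for all j ∈ ℕ: e_{k_j}(id_j) ≥ c · 2^{jd(1/u2 − p1/(u1·p2))}, where k_j = ⌊2^{jd(1 − p1/u1)}⌋. -/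
open scoped ENNReal NNReal

/-!
If `2^(k-1)` balls of `m_{u₂,p₂}`-radius `ε` covered the unit ball of `m_{u₁,p₁}`, two of any
`2^(k-1) + 1` points of that ball would share a ball. Measuring distances by the level-`0` term
`2^{jd(1/u₂-1/p₂)} ‖·‖_{ℓ_{p₂}}` of the target norm, a quasi-norm with constant `2^{1+1/p₂}`,
every such separated family therefore bounds `ε` from below.

For `k = ⌊2^t⌋`, `t = jd(1 - p₁/u₁)`, take the level `μ` with `t + 3 ≤ μd < t + 3 + d`, one
level-`j` point in each of `8k` level-`μ` cubes, and a binary code of length `8k` with more than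
`2^(k-1)` words at pairwise Hamming distance `> k` (Gilbert–Varshamov). The vectors
`2^{(t-μd)/p₁} 1_f`, `f` a codeword, lie in the unit ball of `m_{u₁,p₁}` because a level-`ν` cube
meets at most `2^{(μ-ν)₊ d}` of the chosen points, and any two of them are `ℓ_{p₂}`-apart by at
least `(k+1)^{1/p₂} 2^{(t-μd)/p₁} ≥ 2^{t/p₂ - (d+3)/p₁}`, which is the rate
`2^{jd(1/u₂ - p₁/(u₁p₂))}` after the level-`0` weight. The construction needs `μ ≤ j`, which
fails for only finitely many `j`; for those the entropy numbers are merely positive.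
-/

open Finset

theorem ENNReal.exists_pos_ofReal_mul_le {w E : ℝ≥0∞} (hw : w ≠ ⊤) (hE : 0 < E) :
    ∃ c : ℝ, 0 < c ∧ ENNReal.ofReal c * w ≤ E := by
  rcases eq_or_ne w 0 with rfl | hw0
  · exact ⟨1, one_pos, by simp⟩
  obtain ⟨c, -, hc0, hc⟩ := ENNReal.lt_iff_exists_real_btwn.1 (ENNReal.div_pos hE.ne' hw)
  exact ⟨c, ENNReal.ofReal_pos.1 hc0,
    (mul_le_mul_left hc.le w).trans (ENNReal.div_mul_cancel hw0 hw).le⟩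

theorem ENNReal.exists_pos_forall_ofReal_mul_le {w E : ℕ → ℝ≥0∞} (hw : ∀ j, w j ≠ ⊤)
    (hE : ∀ j, 0 < E j) {c₀ : ℝ} (hc₀ : 0 < c₀) {J : ℕ}
    (hJ : ∀ j, J ≤ j → ENNReal.ofReal c₀ * w j ≤ E j) :
    ∃ c : ℝ, 0 < c ∧ ∀ j, ENNReal.ofReal c * w j ≤ E j := by
  choose c hc hcE using fun j => exists_pos_ofReal_mul_le (hw j) (hE j)
  set s := insert c₀ ((range J).image c)
  refine ⟨s.min' (insert_nonempty _ _), ?_, fun j => ?_⟩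
  · rcases mem_insert.1 (min'_mem s _) with h | h
    · rw [h]
      exact hc₀
    · obtain ⟨i, -, hi⟩ := mem_image.1 h
      rw [← hi]
      exact hc i
  · rcases lt_or_ge j J with hj | hj
    · refine le_trans ?_ (hcE j)
      gcongr
      exact min'_le _ _ (mem_insert_of_mem (mem_image_of_mem c (mem_range.2 hj)))
    · refine le_trans ?_ (hJ j hj)
      gcongr
      exact min'_le _ _ (mem_insert_self _ _)

instance (d j ν : ℕ) (m k : Fin d → ℤ) : Decidable (cubeSub d j ν m k) := by
  unfold cubeSub; infer_instance

theorem div_le_entropyNumber_of_separated {Λ : Type*} [AddCommGroup Λ]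
    {N₁ N₂ S : Λ → ℝ≥0∞} {K s : ℝ≥0∞} {k : ℕ} (hSN : ∀ x, S x ≤ N₂ x)
    (hS : ∀ x y, S (x - y) ≤ K * max (S x) (S y))
    {ι : Type*} [Fintype ι] (hι : 2 ^ (k - 1) < Fintype.card ι) (x : ι → Λ)
    (hx : ∀ i, N₁ (x i) ≤ 1) (hsep : Pairwise fun i i' => s ≤ S (x i - x i')) :
    s / K ≤ entropyNumber N₁ N₂ k := by
  refine le_sInf fun ε ⟨_, c, hc⟩ => ENNReal.div_le_of_le_mul ?_
  choose φ hφ using fun i => hc (x i) (hx i)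
  obtain ⟨i, i', hii', hφi⟩ := Fintype.exists_ne_map_eq_of_card_lt φ (by simpa using hι)
  calc s ≤ S (x i - x i') := hsep hii'
    _ = S ((x i - c (φ i)) - (x i' - c (φ i'))) := by rw [hφi, sub_sub_sub_cancel_right]
    _ ≤ K * max (S (x i - c (φ i))) (S (x i' - c (φ i'))) := hS _ _
    _ ≤ K * ε := by grw [hSN, hSN, hφ i, hφ i', max_self]
    _ = ε * K := mul_comm _ _

theorem tsum_subtype_le_card_filter_mul {γ : Type*} {P : γ → Prop} [DecidablePred P]
    {g : γ → ℝ≥0∞} {S : Finset γ} {B : ℝ≥0∞} (hS : ∀ m, g m ≠ 0 → m ∈ S)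
    (hB : ∀ m, g m ≤ B) :
    ∑' m : {m // P m}, g m ≤ #{m ∈ S | P m} * B := by
  calc ∑' m : {m // P m}, g m = ∑' m, {m | P m}.indicator g m := tsum_subtype {m | P m} g
    _ = ∑ m ∈ {m ∈ S | P m}, {m | P m}.indicator g m := by
        refine tsum_eq_sum fun m hm => ?_
        by_cases hP : P m
        · rw [Set.indicator_of_mem (show m ∈ {m | P m} from hP)]
          by_contra hg
          exact hm (mem_filter.2 ⟨hS m hg, hP⟩)
        · exact Set.indicator_of_notMem hP g
    _ ≤ ∑ _m ∈ {m ∈ S | P m}, B :=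
        sum_le_sum fun m _ => (Set.indicator_le_self _ g m).trans (hB m)
    _ = #{m ∈ S | P m} * B := by rw [sum_const, nsmul_eq_mul]

section Code

theorem card_powerset_filter_card_le_mul_le {β : Type*} (s : Finset β) (r : ℕ) :
    #{t ∈ s.powerset | #t ≤ r} * 7 ^ (#s - r) ≤ 8 ^ #s := by
  calc #{t ∈ s.powerset | #t ≤ r} * 7 ^ (#s - r)
      = ∑ t ∈ s.powerset with #t ≤ r, 7 ^ (#s - r) := by rw [sum_const, smul_eq_mul]
    _ ≤ ∑ t ∈ s.powerset with #t ≤ r, 1 ^ #t * 7 ^ (#s - #t) := by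
        refine sum_le_sum fun t ht => ?_
        rw [one_pow, one_mul]
        exact Nat.pow_le_pow_right (by norm_num) (by have := (mem_filter.1 ht).2; omega)
    _ ≤ ∑ t ∈ s.powerset, 1 ^ #t * 7 ^ (#s - #t) := sum_le_sum_of_subset (filter_subset _ _)
    _ = 8 ^ #s := by rw [sum_pow_mul_eq_add_pow]

variable {α ι : Type*} [Fintype α] [Fintype ι] [DecidableEq ι]

theorem exists_pairwise_not_rel_of_mul_lt_card (R : α → α → Prop) [DecidableRel R]
    (hrefl : ∀ a, R a a) (hsymm : ∀ a b, R a b → R b a) {N V : ℕ}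
    (hball : ∀ a, #{b | R a b} ≤ V) (hN : N * V < Fintype.card α) :
    ∃ F : Finset α, N < #F ∧ (F : Set α).Pairwise fun a b => ¬ R a b := by
  classical
  obtain ⟨F, hF, hmax⟩ :=
    exists_max_image {F : Finset α | (F : Set α).Pairwise fun a b => ¬ R a b} card
      ⟨∅, by simp⟩
  rw [mem_filter] at hF
  refine ⟨F, not_le.1 fun hle => ?_, hF.2⟩
  -- a maximal packing is covering, so `#F` balls of size `≤ V` exhaust `α`
  obtain ⟨b, hb⟩ : ∃ b, ∀ a ∈ F, ¬ R a b := by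
    by_contra! h
    have hcover : (univ : Finset α) ⊆ F.biUnion fun a => {b | R a b} := fun b _ => by
      simpa using h b
    have := (card_le_card hcover).trans (card_biUnion_le.trans (sum_le_card_nsmul _ _ V
      fun a _ => hball a))
    rw [card_univ, smul_eq_mul] at this
    exact absurd (this.trans (Nat.mul_le_mul_right V hle)) hN.not_ge
  have hbF : b ∉ F := fun h => hb b h (hrefl b)
  have := hmax (insert b F) <| mem_filter.2 ⟨mem_univ _, by
    rw [coe_insert, Set.pairwise_insert]
    exact ⟨hF.2, fun a ha _ => ⟨fun h => hb a ha (hsymm _ _ h), hb a ha⟩⟩⟩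
  rw [card_insert_of_notMem hbF] at this
  omega

theorem card_hammingDist_le_le (f : ι → Bool) (r : ℕ) :
    #{g | hammingDist f g ≤ r} ≤ #{s ∈ (univ : Finset ι).powerset | #s ≤ r} := by
  refine card_le_card_of_injOn (fun g => ({i | f i ≠ g i} : Finset ι)) (fun g hg => ?_)
    fun g _ g' _ h => ?_
  · simp only [coe_filter, mem_univ, true_and, Set.mem_ofPred_eq] at hg ⊢
    exact ⟨mem_powerset.2 (subset_univ _), hg⟩
  · funext i
    have hi := congr(i ∈ $h)
    simp only [mem_filter, mem_univ, true_and] at hi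
    revert hi
    cases f i <;> cases g i <;> cases g' i <;> simp

/-- Gilbert–Varshamov bound. -/
theorem exists_binary_code {k : ℕ} (hk : 1 ≤ k) (hι : Fintype.card ι = 8 * k) :
    ∃ F : Finset (ι → Bool), 2 ^ (k - 1) < #F ∧
      (F : Set (ι → Bool)).Pairwise fun f g => k < hammingDist f g := by
  set V := #{s ∈ (univ : Finset ι).powerset | #s ≤ k}
  have hV : V * 7 ^ (7 * k) ≤ 8 ^ (8 * k) := by
    have := card_powerset_filter_card_le_mul_le (univ : Finset ι) k
    rwa [card_univ, hι, show 8 * k - k = 7 * k by omega] at this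
  have hpow : 2 ^ (k - 1) * 8 ^ (8 * k) < 2 ^ (8 * k) * 7 ^ (7 * k) := by
    calc 2 ^ (k - 1) * 8 ^ (8 * k) < 2 ^ k * 8 ^ (8 * k) := by
          gcongr
          · norm_num
          · omega
      _ = 2 ^ (8 * k) * 2 ^ (17 * k) := by
          rw [← pow_add, show (8 : ℕ) = 2 ^ 3 from rfl, ← pow_mul, ← pow_add]; ring_nf
      _ ≤ 2 ^ (8 * k) * 7 ^ (7 * k) := by
          rw [pow_mul 2 17, pow_mul 7 7]
          exact Nat.mul_le_mul_left _ (Nat.pow_le_pow_left (by norm_num) k)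
  obtain ⟨F, hF, hsep⟩ := exists_pairwise_not_rel_of_mul_lt_card (α := ι → Bool)
    (N := 2 ^ (k - 1)) (V := V) (fun f g => hammingDist f g ≤ k) (fun f => by simp)
    (fun f g h => (hammingDist_comm g f).trans_le h) (card_hammingDist_le_le · k) <| by
      rw [Fintype.card_fun, Fintype.card_bool, hι]
      refine Nat.lt_of_mul_lt_mul_right (a := 7 ^ (7 * k)) ?_
      calc 2 ^ (k - 1) * V * 7 ^ (7 * k) ≤ 2 ^ (k - 1) * 8 ^ (8 * k) := by
            rw [mul_assoc]; gcongr
        _ < _ := hpow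
  exact ⟨F, hF, fun f hf g hg hfg => not_le.1 (hsep hf hg hfg)⟩

end Code

section MorreySequenceSpaces

variable {d : ℕ}

theorem mNorm_le_of_support_subset {u p : ℝ} (hp : 0 < p) {j : ℕ} {x : (Fin d → ℤ) → ℂ}
    {S : Finset (Fin d → ℤ)} {a B : ℝ≥0∞} (hS : ∀ m, x m ≠ 0 → m ∈ S)
    (ha : ∀ m, (‖x m‖₊ : ℝ≥0∞) ≤ a)
    (hB : ∀ ν ≤ j, ∀ k, (2 : ℝ≥0∞) ^ ((d : ℝ) * ((j : ℝ) - ν) * (1 / u - 1 / p)) *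
      (#{m ∈ S | cubeSub d j ν m k} * a ^ p) ^ (1 / p) ≤ B) :
    mNorm d u p j x ≤ B := by
  refine iSup_le fun ⟨⟨ν, k⟩, hν, _⟩ => le_trans ?_ (hB ν hν k)
  gcongr
  refine tsum_subtype_le_card_filter_mul (P := fun m => cubeSub d j ν m k)
    (g := fun m => (‖x m‖₊ : ℝ≥0∞) ^ p) (fun m hm => hS m fun h => hm ?_) fun m => ?_
  · simp [h, hp]
  · exact ENNReal.rpow_le_rpow (ha m) hp.le

theorem card_mul_rpow_le_lqNorm {q : ℝ} (hq : 0 < q) {j : ℕ} {z : (Fin d → ℤ) → ℂ}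
    {D : Finset (Fin d → ℤ)} {a : ℝ≥0∞} (hD : ∀ m ∈ D, inUnitCube d j m)
    (ha : ∀ m ∈ D, a ≤ ‖z m‖₊) : (#D * a ^ q) ^ (1 / q) ≤ lqNorm d q j z := by
  refine ENNReal.rpow_le_rpow ?_ (by positivity)
  calc (#D : ℝ≥0∞) * a ^ q = ∑ m ∈ D, a ^ q := by rw [sum_const, nsmul_eq_mul]
    _ ≤ ∑ m ∈ D, (‖z m‖₊ : ℝ≥0∞) ^ q :=
        sum_le_sum fun m hm => ENNReal.rpow_le_rpow (ha m hm) hq.le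
    _ = ∑' m : D, (‖z m‖₊ : ℝ≥0∞) ^ q := (Finset.tsum_subtype D _).symm
    _ ≤ ∑' m : {m // inUnitCube d j m}, (‖z m.1‖₊ : ℝ≥0∞) ^ q :=
        ENNReal.tsum_comp_le_tsum_of_injective
          (f := fun m : D => (⟨m, hD m m.2⟩ : {m // inUnitCube d j m}))
          (fun m m' h => Subtype.ext (congrArg Subtype.val h :))
          fun m => (‖z m.1‖₊ : ℝ≥0∞) ^ q

theorem lqNorm_sub_le {q : ℝ} (hq : 0 < q) (j : ℕ) (x y : (Fin d → ℤ) → ℂ) :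
    lqNorm d q j (x - y) ≤ 2 ^ (1 + 1 / q) * max (lqNorm d q j x) (lqNorm d q j y) := by
  set A := ∑' m : {m // inUnitCube d j m}, (‖x m.1‖₊ : ℝ≥0∞) ^ q
  set B := ∑' m : {m // inUnitCube d j m}, (‖y m.1‖₊ : ℝ≥0∞) ^ q
  have hpt : ∀ m, (‖(x - y) m‖₊ : ℝ≥0∞) ^ q ≤
      2 ^ q * ((‖x m‖₊ : ℝ≥0∞) ^ q + (‖y m‖₊ : ℝ≥0∞) ^ q) := by
    intro m
    calc (‖(x - y) m‖₊ : ℝ≥0∞) ^ q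
        ≤ (2 * max (‖x m‖₊ : ℝ≥0∞) ‖y m‖₊) ^ q := by
          gcongr
          calc (‖(x - y) m‖₊ : ℝ≥0∞) ≤ ‖x m‖₊ + ‖y m‖₊ := by
                exact_mod_cast nnnorm_sub_le (x m) (y m)
            _ ≤ 2 * max (‖x m‖₊ : ℝ≥0∞) ‖y m‖₊ := by
                rw [two_mul]; exact add_le_add (le_max_left _ _) (le_max_right _ _)
      _ = 2 ^ q * max ((‖x m‖₊ : ℝ≥0∞) ^ q) ((‖y m‖₊ : ℝ≥0∞) ^ q) := by
          rw [ENNReal.mul_rpow_of_nonneg _ _ hq.le, ENNReal.max_rpow hq.le]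
      _ ≤ _ := by gcongr; exact max_le_add_of_nonneg (by positivity) (by positivity)
  have hsum : ∑' m : {m // inUnitCube d j m}, (‖(x - y) m.1‖₊ : ℝ≥0∞) ^ q ≤
      2 ^ (q + 1) * max A B := by
    calc _ ≤ ∑' m : {m // inUnitCube d j m},
            2 ^ q * ((‖x m.1‖₊ : ℝ≥0∞) ^ q + (‖y m.1‖₊ : ℝ≥0∞) ^ q) :=
          ENNReal.tsum_le_tsum fun m => hpt m.1
      _ = 2 ^ q * (A + B) := by rw [ENNReal.tsum_mul_left, ENNReal.tsum_add]
      _ ≤ 2 ^ q * (2 * max A B) := by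
          gcongr; rw [two_mul]; exact add_le_add (le_max_left _ _) (le_max_right _ _)
      _ = 2 ^ (q + 1) * max A B := by
          rw [ENNReal.rpow_add _ _ two_ne_zero ENNReal.ofNat_ne_top, ENNReal.rpow_one, mul_assoc]
  calc lqNorm d q j (x - y) ≤ (2 ^ (q + 1) * max A B) ^ (1 / q) := by
        unfold lqNorm; gcongr
    _ = 2 ^ (1 + 1 / q) * max (lqNorm d q j x) (lqNorm d q j y) := by
        rw [ENNReal.mul_rpow_of_nonneg _ _ (by positivity), ← ENNReal.rpow_mul,
          ENNReal.max_rpow (by positivity)]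
        congr 2
        field_simp

theorem two_rpow_mul_lqNorm_sub_le {u p : ℝ} (hp : 0 < p) (j : ℕ)
    (z z' : (Fin d → ℤ) → ℂ) :
    2 ^ ((d : ℝ) * j * (1 / u - 1 / p)) * lqNorm d p j (z - z') ≤ 2 ^ (1 + 1 / p) *
      max (2 ^ ((d : ℝ) * j * (1 / u - 1 / p)) * lqNorm d p j z)
        (2 ^ ((d : ℝ) * j * (1 / u - 1 / p)) * lqNorm d p j z') := by
  rw [← mul_max_of_nonneg _ _ (by positivity), mul_left_comm]
  gcongr
  exact lqNorm_sub_le hp j z z'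

theorem two_rpow_mul_lqNorm_le_mNorm (u p : ℝ) (j : ℕ) (z : (Fin d → ℤ) → ℂ) :
    (2 : ℝ≥0∞) ^ ((d : ℝ) * j * (1 / u - 1 / p)) * lqNorm d p j z ≤ mNorm d u p j z := by
  have hQ : ∀ m, cubeSub d j 0 m 0 ↔ inUnitCube d j m := fun m => by
    simp [cubeSub, inUnitCube]
  refine le_trans (le_of_eq ?_) (le_iSup _ ⟨(0, 0), Nat.zero_le j, fun i => by simp⟩)
  simp only [CharP.cast_eq_zero, sub_zero, lqNorm]
  congr 2
  exact ((Equiv.subtypeEquivRight hQ).tsum_eq fun m => (‖z m.1‖₊ : ℝ≥0∞) ^ p).symm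

theorem mNorm_single_le_one {u p : ℝ} (hp : 0 < p) (hpu : p ≤ u) (j : ℕ)
    (m₀ : Fin d → ℤ) {c : ℂ} (hc : ‖c‖ ≤ 1) :
    mNorm d u p j (Pi.single m₀ c) ≤ 1 := by
  refine mNorm_le_of_support_subset hp (S := {m₀}) (a := 1) (fun m hm => ?_) (fun m => ?_)
    fun ν hν k => ?_
  · by_contra h
    exact hm (Pi.single_eq_of_ne (mem_singleton.not.1 h) _)
  · rcases eq_or_ne m m₀ with rfl | hm
    · rw [Pi.single_eq_same, ENNReal.coe_le_one_iff, ← NNReal.coe_le_one, coe_nnnorm]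
      exact hc
    · simp [Pi.single_eq_of_ne hm]
  · have hE : (d : ℝ) * (j - ν) * (1 / u - 1 / p) ≤ 0 := by
      refine mul_nonpos_of_nonneg_of_nonpos (mul_nonneg (by positivity) ?_) ?_
      · exact sub_nonneg.2 (by exact_mod_cast hν)
      · exact sub_nonpos.2 (one_div_le_one_div_of_le hp hpu)
    calc (2 : ℝ≥0∞) ^ ((d : ℝ) * (j - ν) * (1 / u - 1 / p)) *
          (#{m ∈ ({m₀} : Finset (Fin d → ℤ)) | cubeSub d j ν m k} * 1 ^ p) ^ (1 / p)
        ≤ 2 ^ (0 : ℝ) * (1 * 1 ^ p) ^ (1 / p) := by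
          gcongr
          · exact one_le_two
          · exact_mod_cast (card_filter_le _ _).trans (card_singleton _).le
      _ = 1 := by simp

theorem nnnorm_le_lqNorm_single {q : ℝ} (hq : 0 < q) {j : ℕ} {m₀ : Fin d → ℤ}
    (hm₀ : inUnitCube d j m₀) (c : ℂ) :
    (‖c‖₊ : ℝ≥0∞) ≤ lqNorm d q j (Pi.single m₀ c) := by
  have := card_mul_rpow_le_lqNorm hq (D := {m₀}) (a := ‖c‖₊) (z := Pi.single m₀ c)
    (fun m hm => mem_singleton.1 hm ▸ hm₀)
    fun m hm => by rw [mem_singleton.1 hm, Pi.single_eq_same]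
  rwa [card_singleton, Nat.cast_one, one_mul, ← ENNReal.rpow_mul, mul_one_div_cancel hq.ne',
    ENNReal.rpow_one] at this

/-- The corner of the level-`μ` cube `Q_{μ,n}`, as a level-`j` lattice point. -/
def gridPoint (j μ : ℕ) (n : Fin d → ℤ) : Fin d → ℤ := fun i => 2 ^ (j - μ) * n i

theorem gridPoint_injective (j μ : ℕ) : Function.Injective (gridPoint (d := d) j μ) :=
  fun _ _ h => funext fun i =>
    mul_left_cancel₀ (pow_ne_zero _ two_ne_zero) (congrFun h i)

theorem inUnitCube_gridPoint {j μ : ℕ} (hμ : μ ≤ j) {n : Fin d → ℤ}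
    (hn : inUnitCube d μ n) :
    inUnitCube d j (gridPoint j μ n) := fun i => by
  have h2 : (2 : ℤ) ^ j = 2 ^ (j - μ) * 2 ^ μ := by rw [← pow_add, Nat.sub_add_cancel hμ]
  refine ⟨mul_nonneg (by positivity) (hn i).1, ?_⟩
  rw [h2]
  exact mul_lt_mul_of_pos_left (hn i).2 (by positivity)

theorem card_filter_cubeSub_gridPoint_le {j μ : ℕ} (hμ : μ ≤ j) (T : Finset (Fin d → ℤ))
    (ν : ℕ) (k : Fin d → ℤ) :
    #{n ∈ T | cubeSub d j ν (gridPoint j μ n) k} ≤ 2 ^ ((μ - ν) * d) := by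
  have hpos : (0 : ℤ) < 2 ^ (j - μ) := by positivity
  rcases le_total ν μ with hνμ | hμν
  · -- a level-`ν` cube contains `2^((μ-ν)d)` level-`μ` cubes
    have hsplit : (2 : ℤ) ^ (j - ν) = 2 ^ (j - μ) * 2 ^ (μ - ν) := by
      rw [← pow_add]; congr 1; omega
    calc #{n ∈ T | cubeSub d j ν (gridPoint j μ n) k}
        ≤ #(Fintype.piFinset fun i => Ico (k i * 2 ^ (μ - ν)) ((k i + 1) * 2 ^ (μ - ν))) := by
          refine card_le_card fun n hn => Fintype.mem_piFinset.2 fun i => ?_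
          obtain ⟨h1, h2⟩ := (mem_filter.1 hn).2 i
          rw [gridPoint, hsplit] at h1 h2
          rw [mem_Ico]
          constructor
          · exact le_of_mul_le_mul_left (by linarith) hpos
          · exact lt_of_mul_lt_mul_left (by linarith) hpos.le
      _ = 2 ^ ((μ - ν) * d) := by
          have : ∀ c : ℤ, ((c + 1) * 2 ^ (μ - ν) - c * 2 ^ (μ - ν)).toNat = 2 ^ (μ - ν) :=
            fun c => by
              rw [show (c + 1) * 2 ^ (μ - ν) - c * 2 ^ (μ - ν) = (2 ^ (μ - ν) : ℕ) by
                push_cast; ring, Int.toNat_natCast]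
          simp only [Fintype.card_piFinset, Int.card_Ico, this, prod_const, card_univ,
            Fintype.card_fin, ← pow_mul]
  · -- a level-`ν` cube meets at most one level-`μ` cube
    rw [Nat.sub_eq_zero_of_le hμν, zero_mul, pow_zero]
    refine card_le_one.2 fun _ hn _ hn' => funext fun i => ?_
    obtain ⟨h1, h2⟩ := (mem_filter.1 hn).2 i
    obtain ⟨h1', h2'⟩ := (mem_filter.1 hn').2 i
    simp only [gridPoint] at h1 h2 h1' h2'
    have hle : (2 : ℤ) ^ (j - ν) ≤ 2 ^ (j - μ) := pow_le_pow_right₀ (by norm_num) (by omega)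
    have hlt : ∀ a b : ℤ, k i * 2 ^ (j - ν) ≤ 2 ^ (j - μ) * b →
        2 ^ (j - μ) * a < (k i + 1) * 2 ^ (j - ν) → a - b < 1 := fun a b hb ha =>
      lt_of_mul_lt_mul_left (by rw [mul_sub, mul_one]; linarith) hpos.le
    have := hlt _ _ h1' h2
    have := hlt _ _ h1 h2'
    omega

theorem mNorm_le_one_of_support_subset_grid {u p : ℝ} (hp : 0 < p) (hpu : p ≤ u) {j μ : ℕ}
    (hμ : μ ≤ j) (hμd : (j * d : ℝ) * (1 - p / u) ≤ μ * d) {T : Finset (Fin d → ℤ)}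
    {x : (Fin d → ℤ) → ℂ} (hS : ∀ m, x m ≠ 0 → m ∈ T.image (gridPoint j μ))
    (hx : ∀ m, (‖x m‖₊ : ℝ≥0∞) ≤ 2 ^ (((j * d : ℝ) * (1 - p / u) - μ * d) / p)) :
    mNorm d u p j x ≤ 1 := by
  set α := ((j * d : ℝ) * (1 - p / u) - μ * d) / p
  refine mNorm_le_of_support_subset hp hS hx fun ν hν k => ?_
  have hcount : #{m ∈ T.image (gridPoint j μ) | cubeSub d j ν m k} ≤ 2 ^ ((μ - ν) * d) := by
    rw [filter_image]
    exact card_image_le.trans (card_filter_cubeSub_gridPoint_le hμ T ν k)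
  set e := (d : ℝ) * (j - ν) * (1 / u - 1 / p) +
    ((((μ - ν) * d : ℕ) : ℝ) + α * p) * (1 / p)
  have hexp : e ≤ 0 := by
    have hu : 0 < u := hp.trans_le hpu
    rcases le_total ν μ with hνμ | hμν
    · have : e = -(ν * d / u) := by
        simp only [e, α]; rw [Nat.cast_mul, Nat.cast_sub hνμ]; field_simp; ring
      rw [this]
      exact neg_nonpos.2 (by positivity)
    · have : e = ((ν * d : ℝ) * (1 - p / u) - μ * d) / p := by
        simp only [e, α]; rw [Nat.sub_eq_zero_of_le hμν]; push_cast; field_simp; ring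
      rw [this]
      refine div_nonpos_of_nonpos_of_nonneg ?_ hp.le
      have hν' : (ν * d : ℝ) ≤ j * d := by gcongr
      have hpu' : 0 ≤ 1 - p / u := by rw [sub_nonneg]; exact (div_le_one hu).2 hpu
      linarith [mul_le_mul_of_nonneg_right hν' hpu']
  calc (2 : ℝ≥0∞) ^ ((d : ℝ) * (j - ν) * (1 / u - 1 / p)) *
        (#{m ∈ T.image (gridPoint j μ) | cubeSub d j ν m k} * (2 ^ α) ^ p) ^ (1 / p)
      ≤ 2 ^ ((d : ℝ) * (j - ν) * (1 / u - 1 / p)) *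
        (2 ^ ((((μ - ν) * d : ℕ) : ℝ)) * 2 ^ (α * p)) ^ (1 / p) := by
        rw [← ENNReal.rpow_mul, ENNReal.rpow_natCast]
        gcongr
        exact_mod_cast hcount
    _ = 2 ^ e := by
        rw [← ENNReal.rpow_add _ _ two_ne_zero ENNReal.ofNat_ne_top, ← ENNReal.rpow_mul,
          ← ENNReal.rpow_add _ _ two_ne_zero ENNReal.ofNat_ne_top]
    _ ≤ 2 ^ (0 : ℝ) := ENNReal.rpow_le_rpow_of_exponent_le one_le_two hexp
    _ = 1 := ENNReal.rpow_zero

section CodeVector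

variable (P : Finset (Fin d → ℤ)) (a : ℂ)

def codeVector (f : P → Bool) : (Fin d → ℤ) → ℂ :=
  fun m => if h : m ∈ P then (if f ⟨m, h⟩ then a else 0) else 0

theorem mem_of_codeVector_ne_zero {f : P → Bool} {m : Fin d → ℤ}
    (h : codeVector P a f m ≠ 0) : m ∈ P := by
  by_contra hm
  exact h (dif_neg hm)

theorem nnnorm_codeVector_le (f : P → Bool) (m : Fin d → ℤ) :
    ‖codeVector P a f m‖₊ ≤ ‖a‖₊ := by
  unfold codeVector
  split_ifs <;> simp

theorem card_mul_rpow_le_lqNorm_codeVector_sub {q : ℝ} (hq : 0 < q) {j : ℕ}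
    (hP : ∀ m ∈ P, inUnitCube d j m) (f g : P → Bool) :
    (hammingDist f g * (‖a‖₊ : ℝ≥0∞) ^ q) ^ (1 / q) ≤
      lqNorm d q j (codeVector P a f - codeVector P a g) := by
  classical
  have hD : #(({m | f m ≠ g m} : Finset P).map (Function.Embedding.subtype _)) =
      hammingDist f g := by
    rw [card_map]; rfl
  rw [← hD]
  refine card_mul_rpow_le_lqNorm hq (fun m hm => ?_) fun m hm => ?_
  · obtain ⟨m, -, rfl⟩ := mem_map.1 hm
    exact hP m m.2
  · obtain ⟨m, hmf, rfl⟩ := mem_map.1 hm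
    have hfg := (mem_filter.1 hmf).2
    simp only [Function.Embedding.subtype_apply, Pi.sub_apply, codeVector, dif_pos m.2]
    revert hfg
    cases f m <;> cases g m <;> simp

end CodeVector

variable {u1 p1 u2 p2 : ℝ}

theorem le_entropyNumber_of_grid (hp1 : 0 < p1) (hp1u1 : p1 ≤ u1) (hp2 : 0 < p2) {j μ k : ℕ}
    (hμ : μ ≤ j) (hμd : (j * d : ℝ) * (1 - p1 / u1) ≤ μ * d) (hk : 1 ≤ k)
    (hkμ : 8 * k ≤ 2 ^ (μ * d)) :
    2 ^ ((d : ℝ) * j * (1 / u2 - 1 / p2)) * ((k + 1 : ℝ≥0∞) ^ (1 / p2) *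
        2 ^ (((j * d : ℝ) * (1 - p1 / u1) - μ * d) / p1)) / 2 ^ (1 + 1 / p2) ≤
      entropyNumber (mNorm d u1 p1 j) (mNorm d u2 p2 j) k := by
  classical
  set α := ((j * d : ℝ) * (1 - p1 / u1) - μ * d) / p1
  obtain ⟨T, hTcube, hT⟩ := exists_subset_card_eq (n := 8 * k)
    (s := Fintype.piFinset fun _ : Fin d => Ico (0 : ℤ) (2 ^ μ)) (by
      have h2 : ((2 : ℤ) ^ μ - 0).toNat = 2 ^ μ := by
        rw [sub_zero]; exact_mod_cast Int.toNat_natCast (2 ^ μ)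
      rwa [Fintype.card_piFinset, Int.card_Ico, h2, prod_const, card_univ, Fintype.card_fin,
        ← pow_mul])
  set P := T.image (gridPoint j μ)
  have hP : Fintype.card P = 8 * k := by
    rw [Fintype.card_coe, card_image_of_injective _ (gridPoint_injective j μ), hT]
  have hPcube : ∀ m ∈ P, inUnitCube d j m := fun m hm => by
    obtain ⟨n, hn, rfl⟩ := mem_image.1 hm
    refine inUnitCube_gridPoint hμ fun i => ?_
    have := mem_Ico.1 (Fintype.mem_piFinset.1 (hTcube hn) i)
    exact_mod_cast this
  obtain ⟨F, hF, hsep⟩ := exists_binary_code hk hP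
  set a : ℂ := ↑((2 : ℝ) ^ α)
  have ha : (‖a‖₊ : ℝ≥0∞) = 2 ^ α := by
    rw [← enorm_eq_nnnorm, ← ofReal_norm, Complex.norm_real,
      Real.norm_of_nonneg (by positivity), ← ENNReal.ofReal_rpow_of_pos two_pos,
      ENNReal.ofReal_ofNat]
  refine div_le_entropyNumber_of_separated (two_rpow_mul_lqNorm_le_mNorm u2 p2 j)
    (two_rpow_mul_lqNorm_sub_le hp2 j) (ι := F) (by simpa using hF) (fun f => codeVector P a f.1)
    (fun f => mNorm_le_one_of_support_subset_grid hp1 hp1u1 hμ hμd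
      (fun m hm => mem_of_codeVector_ne_zero P a hm)
      fun m => ha ▸ ENNReal.coe_le_coe.2 (nnnorm_codeVector_le P a f.1 m))
    fun f g hfg => ?_
  gcongr
  calc (k + 1 : ℝ≥0∞) ^ (1 / p2) * 2 ^ α
      = ((k + 1 : ℕ) * (‖a‖₊ : ℝ≥0∞) ^ p2) ^ (1 / p2) := by
        rw [ENNReal.mul_rpow_of_nonneg _ _ (by positivity), ← ENNReal.rpow_mul,
          mul_one_div_cancel hp2.ne', ENNReal.rpow_one, ha]
        push_cast; rfl
    _ ≤ (hammingDist f.1 g.1 * (‖a‖₊ : ℝ≥0∞) ^ p2) ^ (1 / p2) := by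
        gcongr
        exact hsep f.2 g.2 (fun h => hfg (Subtype.ext h))
    _ ≤ _ := card_mul_rpow_le_lqNorm_codeVector_sub P a hp2 hPcube f.1 g.1

theorem two_rpow_le_entropyNumber (hd : 1 ≤ d) (hp1 : 0 < p1) (hp1u1 : p1 ≤ u1) (hp2 : 0 < p2)
    {j : ℕ} (hj : (j * d : ℝ) * (1 - p1 / u1) + 3 ≤ j * d) :
    2 ^ (-((d + 3) / p1 + 1 + 1 / p2)) * 2 ^ ((j * d : ℝ) * (1 / u2 - p1 / (u1 * p2))) ≤
      entropyNumber (mNorm d u1 p1 j) (mNorm d u2 p2 j)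
        ⌊(2 : ℝ) ^ ((j * d : ℝ) * (1 - p1 / u1))⌋₊ := by
  have hu1 : 0 < u1 := hp1.trans_le hp1u1
  have hd0 : (0 : ℝ) < d := by exact_mod_cast hd
  set t := (j * d : ℝ) * (1 - p1 / u1)
  have ht : 0 ≤ t := mul_nonneg (by positivity) (sub_nonneg.2 ((div_le_one hu1).2 hp1u1))
  set k := ⌊(2 : ℝ) ^ t⌋₊
  have hk : 1 ≤ k := Nat.le_floor (by exact_mod_cast Real.one_le_rpow one_le_two ht)
  set μ := ⌈(t + 3) / d⌉₊
  have hμ : t + 3 ≤ μ * d := (div_le_iff₀ hd0).1 (Nat.le_ceil _)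
  have hμ' : μ * d < t + 3 + d := by
    have := mul_lt_mul_of_pos_right (Nat.ceil_lt_add_one (by positivity : 0 ≤ (t + 3) / d)) hd0
    rwa [add_mul, div_mul_cancel₀ _ hd0.ne', one_mul] at this
  have hμj : μ ≤ j := Nat.ceil_le.2 ((div_le_iff₀ hd0).2 hj)
  have hkμ : 8 * k ≤ 2 ^ (μ * d) := by
    have : (8 * k : ℝ) ≤ 2 ^ (μ * d : ℝ) := calc
      (8 * k : ℝ) ≤ 2 ^ (3 : ℝ) * 2 ^ t := by
        rw [show (2 : ℝ) ^ (3 : ℝ) = 8 by norm_num]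
        gcongr
        exact Nat.floor_le (by positivity)
      _ ≤ 2 ^ (μ * d : ℝ) := by
        rw [← Real.rpow_add two_pos]
        exact Real.rpow_le_rpow_of_exponent_le one_le_two (by linarith)
    rw [← Nat.cast_mul, Real.rpow_natCast] at this
    exact_mod_cast this
  have hk1 : (2 : ℝ≥0∞) ^ (t / p2) ≤ (k + 1 : ℝ≥0∞) ^ (1 / p2) := by
    rw [div_eq_mul_one_div t, ENNReal.rpow_mul]
    gcongr
    rw [← ENNReal.ofReal_ofNat 2, ENNReal.ofReal_rpow_of_pos two_pos,
      ← ENNReal.ofReal_natCast, ← ENNReal.ofReal_one,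
      ← ENNReal.ofReal_add (by positivity) zero_le_one]
    exact ENNReal.ofReal_le_ofReal (Nat.lt_floor_add_one _).le
  refine le_trans ?_ (le_entropyNumber_of_grid hp1 hp1u1 hp2 hμj (by linarith) hk hkμ)
  have hexp : -((d + 3) / p1 + 1 + 1 / p2) + (j * d : ℝ) * (1 / u2 - p1 / (u1 * p2)) ≤
      (d : ℝ) * j * (1 / u2 - 1 / p2) + (t / p2 + (t - μ * d) / p1) - (1 + 1 / p2) := by
    have : (d : ℝ) * j * (1 / u2 - 1 / p2) + t / p2 =
        (j * d : ℝ) * (1 / u2 - p1 / (u1 * p2)) := by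
      simp only [t]; field_simp; ring
    have : -((d + 3) / p1) ≤ (t - μ * d) / p1 := by
      rw [← neg_div]; gcongr; linarith
    linarith
  calc (2 : ℝ≥0∞) ^ (-((d + 3) / p1 + 1 + 1 / p2)) *
        2 ^ ((j * d : ℝ) * (1 / u2 - p1 / (u1 * p2)))
      ≤ 2 ^ ((d : ℝ) * j * (1 / u2 - 1 / p2) + (t / p2 + (t - μ * d) / p1) -
          (1 + 1 / p2)) := by
        rw [← ENNReal.rpow_add _ _ two_ne_zero ENNReal.ofNat_ne_top]
        exact ENNReal.rpow_le_rpow_of_exponent_le one_le_two hexp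
    _ = 2 ^ ((d : ℝ) * j * (1 / u2 - 1 / p2)) * (2 ^ (t / p2) * 2 ^ ((t - μ * d) / p1)) /
          2 ^ (1 + 1 / p2) := by
        rw [ENNReal.rpow_sub _ _ two_ne_zero ENNReal.ofNat_ne_top,
          ENNReal.rpow_add _ _ two_ne_zero ENNReal.ofNat_ne_top,
          ENNReal.rpow_add _ _ two_ne_zero ENNReal.ofNat_ne_top]
    _ ≤ _ := by gcongr

theorem entropyNumber_mNorm_pos (hp1 : 0 < p1) (hp1u1 : p1 ≤ u1) (hp2 : 0 < p2) (j k : ℕ) :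
    0 < entropyNumber (mNorm d u1 p1 j) (mNorm d u2 p2 j) k := by
  set N := 2 ^ (k - 1)
  have hN : (0 : ℝ) < N := by positivity
  let y : Fin (N + 1) → (Fin d → ℤ) → ℂ := fun l => Pi.single 0 ((l : ℂ) / N)
  have hy : ∀ l, mNorm d u1 p1 j (y l) ≤ 1 := fun l => by
    refine mNorm_single_le_one hp1 hp1u1 j 0 ?_
    rw [norm_div, Complex.norm_natCast, Complex.norm_natCast]
    exact div_le_one_of_le₀ (by exact_mod_cast Nat.lt_succ_iff.1 l.2) hN.le
  have hsep : Pairwise fun l l' : Fin (N + 1) =>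
      2 ^ ((d : ℝ) * j * (1 / u2 - 1 / p2)) * ENNReal.ofReal (1 / N) ≤
        2 ^ ((d : ℝ) * j * (1 / u2 - 1 / p2)) * lqNorm d p2 j (y l - y l') := fun l l' hll' => by
    have hll : (1 : ℝ) ≤ ‖(l : ℂ) - l'‖ := by
      have h : (1 : ℤ) ≤ |((l : ℕ) : ℤ) - (l' : ℕ)| :=
        Int.one_le_abs (sub_ne_zero.2 (by exact_mod_cast Fin.val_ne_of_ne hll'))
      rw [show (l : ℂ) - l' = (((l : ℕ) : ℝ) - (l' : ℕ) : ℝ) by push_cast; ring,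
        Complex.norm_real, Real.norm_eq_abs]
      exact_mod_cast h
    have hyy : y l - y l' = Pi.single 0 (((l : ℂ) - l') / N) := by
      simp only [y, ← Pi.single_sub, sub_div]
    beta_reduce
    rw [hyy]
    gcongr
    refine le_trans ?_ (nnnorm_le_lqNorm_single hp2 (fun i => ⟨le_rfl, by positivity⟩) _)
    rw [← enorm_eq_nnnorm, ← ofReal_norm, norm_div, Complex.norm_natCast]
    gcongr
  refine lt_of_lt_of_le (ENNReal.div_pos ?_ ?_) (div_le_entropyNumber_of_separated
    (two_rpow_mul_lqNorm_le_mNorm u2 p2 j) (two_rpow_mul_lqNorm_sub_le hp2 j) (by simp [N]) y hy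
    hsep)
  · positivity
  · exact ENNReal.rpow_ne_top_of_ne_zero two_ne_zero ENNReal.ofNat_ne_top

end MorreySequenceSpaces

theorem mul_one_sub_add_three_le {d j : ℕ} (hd : 1 ≤ d) {p u : ℝ} (hp : 0 < p) (hpu : p ≤ u)
    (hj : ⌈3 * u / p⌉₊ ≤ j) : (j * d : ℝ) * (1 - p / u) + 3 ≤ j * d := by
  have hu : 0 < u := hp.trans_le hpu
  have hjd : (j : ℝ) ≤ j * d :=
    le_mul_of_one_le_right (Nat.cast_nonneg j) (by exact_mod_cast hd)
  have : 3 ≤ (j * d : ℝ) * (p / u) := by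
    calc (3 : ℝ) = 3 * u / p * (p / u) := by field_simp
      _ ≤ (j * d : ℝ) * (p / u) := by gcongr; exact (Nat.ceil_le.1 hj).trans hjd
  linarith

theorem stmt18_general (d : ℕ) (hd : 1 ≤ d) (u1 p1 u2 p2 : ℝ)
    (hp1 : 0 < p1) (hp1u1 : p1 ≤ u1) (hp2 : 0 < p2) :
    ∃ c : ℝ, 0 < c ∧ ∀ j : ℕ, 1 ≤ j →
      ENNReal.ofReal c * (2 : ℝ≥0∞) ^ (((j : ℝ) * d) * (1 / u2 - p1 / (u1 * p2))) ≤
        entropyNumber (mNorm d u1 p1 j) (mNorm d u2 p2 j) (Nat.floor ((2 : ℝ) ^ (((j : ℝ) * d) * (1 - p1 / u1)))) := by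
  obtain ⟨c, hc, h⟩ := ENNReal.exists_pos_forall_ofReal_mul_le
    (w := fun j : ℕ => (2 : ℝ≥0∞) ^ (((j : ℝ) * d) * (1 / u2 - p1 / (u1 * p2))))
    (c₀ := (2 : ℝ) ^ (-((d + 3) / p1 + 1 + 1 / p2))) (J := ⌈3 * u1 / p1⌉₊)
    (E := fun j => entropyNumber (mNorm d u1 p1 j) (mNorm d u2 p2 j)
      ⌊(2 : ℝ) ^ ((j * d : ℝ) * (1 - p1 / u1))⌋₊)
    (fun j => ENNReal.rpow_ne_top_of_ne_zero two_ne_zero ENNReal.ofNat_ne_top)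
    (fun j => entropyNumber_mNorm_pos hp1 hp1u1 hp2 j _) (by positivity) fun j hj => by
      rw [← ENNReal.ofReal_rpow_of_pos two_pos, ENNReal.ofReal_ofNat]
      exact two_rpow_le_entropyNumber hd hp1 hp1u1 hp2
        (mul_one_sub_add_three_le hd hp1 hp1u1 hj)
  exact ⟨c, hc, fun j _ => h j⟩

theorem stmt18 (d : ℕ) (hd : 1 ≤ d) (u1 p1 u2 p2 : ℝ)
    (hp1 : 0 < p1) (hp1u1 : p1 ≤ u1) (hp2 : 0 < p2) (hp2u2 : p2 ≤ u2)
    (h1 : p1 < p2) (h2 : p1 / u1 < p2 / u2) :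
    ∃ c : ℝ, 0 < c ∧ ∀ j : ℕ, 1 ≤ j →
      ENNReal.ofReal c * (2 : ℝ≥0∞) ^ (((j : ℝ) * d) * (1 / u2 - p1 / (u1 * p2))) ≤
        entropyNumber (mNorm d u1 p1 j) (mNorm d u2 p2 j) (Nat.floor ((2 : ℝ) ^ (((j : ℝ) * d) * (1 - p1 / u1)))) :=
  stmt18_general d hd u1 p1 u2 p2 hp1 hp1u1 hp2
end
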